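/- arXiv:2004.01259 — 6 statements merged into one kernel-verified Lean document; each statement's English description precedes it below -/
import Mathlib

section
/- A state y ∈ {0,1}^n is a fixed point of f if and only if y is a fixed point of f^{I_k} and c_v = y_v for all v ∈ I_k(f). -/
open scoped Classical

abbrev BNState (n : ℕ) := Fin n → Bool

def posArc {n : ℕ} (f : BNState n → BNState n) (u v : Fin n) : Prop :=
  ∃ x : BNState n, x u = false ∧ f x v = false ∧ f (Function.update x u true) v = true

def negArc {n : ℕ} (f : BNState n → BNState n) (u v : Fin n) : Prop :=
  ∃ x : BNState n, x u = false ∧ f x v = true ∧ f (Function.update x u true) v = false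

def arcSign {n : ℕ} (f : BNState n → BNState n) (u v : Fin n) (s : ℤ) : Prop :=
  (s = 1 ∧ posArc f u v) ∨ (s = -1 ∧ negArc f u v)

/-- There is a cycle of positive sign in `G(f)` avoiding the vertex set `P`. -/
def hasPosCycleOutside {n : ℕ} (f : BNState n → BNState n) (P : Set (Fin n)) : Prop :=
  ∃ (m : ℕ) (v : Fin (m+1) → Fin n) (s : Fin (m+1) → ℤ),
    Function.Injective v ∧ (∀ i, v i ∉ P) ∧
    (∀ i, arcSign f (v i) (v (i+1)) (s i)) ∧ (∏ i, s i) = 1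

/-- There is a cycle (of any sign) in `G(f)` avoiding the vertex set `F`. -/
def hasCycleOutside {n : ℕ} (f : BNState n → BNState n) (F : Set (Fin n)) : Prop :=
  ∃ (m : ℕ) (v : Fin (m+1) → Fin n) (s : Fin (m+1) → ℤ),
    Function.Injective v ∧ (∀ i, v i ∉ F) ∧
    (∀ i, arcSign f (v i) (v (i+1)) (s i))

/-- `(IC f k).1` is the set `I_k(f)` of components fixed at iteration `k`,
and `(IC f k).2` records the constant values `c_v` (arbitrary off `I_k(f)`). -/
noncomputable def IC {n : ℕ} (f : BNState n → BNState n) :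
    ℕ → Set (Fin n) × (Fin n → Bool)
  | 0 => (∅, fun _ => false)
  | k+1 =>
    let I := (IC f k).1
    let c := (IC f k).2
    let g : BNState n → BNState n := fun x => f (fun u => if u ∈ I then c u else x u)
    ({v | ∀ x y, g x v = g y v}, fun v => g (fun _ => false) v)

/-- The network `f^{I_k}` obtained from `f` by clamping the components of `I_k(f)`. -/
noncomputable def fI {n : ℕ} (f : BNState n → BNState n) (k : ℕ) :
    BNState n → BNState n :=
  fun x => f (fun u => if u ∈ (IC f k).1 then (IC f k).2 u else x u)

/-- Partial evaluation `f^u`: update only component `u`. -/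
def seqStep {n : ℕ} (f : BNState n → BNState n) (u : Fin n) (x : BNState n) : BNState n :=
  Function.update x u (f x u)

/-- Sequential update `f^π = f^{π_n} ∘ ⋯ ∘ f^{π_1}`. -/
def seqUpdate {n : ℕ} (f : BNState n → BNState n) (π : Equiv.Perm (Fin n))
    (x : BNState n) : BNState n :=
  (List.ofFn (fun i => π i)).foldl (fun y u => seqStep f u y) x

lemma IC_val_eq_of_fixed {n : ℕ} (f : BNState n → BNState n) (y : BNState n)
    (hy : f y = y) : ∀ k, ∀ v ∈ (IC f k).1, (IC f k).2 v = y v := by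
  intro k
  induction k with
  | zero => intro v hv; exact absurd hv (Set.notMem_empty v)
  | succ k ih =>
    intro v hv
    have hstate : (fun u => if u ∈ (IC f k).1 then (IC f k).2 u else y u) = y := by
      funext u
      by_cases h : u ∈ (IC f k).1
      · simp [h, ih u h]
      · simp [h]
    simp only [IC, Set.mem_setOf_eq] at hv ⊢
    have := hv (fun _ => false) y
    rw [this, hstate, hy]

lemma state_eq_of_fixed {n : ℕ} (f : BNState n → BNState n) (y : BNState n)
    (hy : f y = y) (k : ℕ) :
    (fun u => if u ∈ (IC f k).1 then (IC f k).2 u else y u) = y := by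
  funext u
  by_cases h : u ∈ (IC f k).1
  · simp [h, IC_val_eq_of_fixed f y hy k u h]
  · simp [h]

/-- `y` is a fixed point of `f` iff `y` is a fixed point of `f^{I_k}` and
`c_v = y_v` for all `v ∈ I_k(f)`. -/
theorem fixedPoint_iff_fI {n : ℕ} (f : BNState n → BNState n) (k : ℕ) (hk : 1 ≤ k)
    (y : BNState n) :
    f y = y ↔ (fI f k y = y ∧ ∀ v ∈ (IC f k).1, (IC f k).2 v = y v) := by
  constructor
  · intro hy
    refine ⟨?_, IC_val_eq_of_fixed f y hy k⟩
    unfold fI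
    rw [state_eq_of_fixed f y hy k, hy]
  · rintro ⟨hfix, hc⟩
    have hstate : (fun u => if u ∈ (IC f k).1 then (IC f k).2 u else y u) = y := by
      funext u
      by_cases h : u ∈ (IC f k).1
      · simp [h, hc u h]
      · simp [h]
    unfold fI at hfix
    rw [hstate] at hfix
    exact hfix
end

section
/- Let f be a Boolean network whose interaction graph G(f) has no positive cycles. If f has a fixed point y, then f^⟨n⟩(x) = y for every x ∈ {0,1}^n. -/
open scoped Classical

/-! Give each arc `u → v` the sign `(-1)^(y u + y v)` read off the fixed point `y`; every cycle of
such arcs is positive. If `f^[k+1] x` differs from `y` at `v`, then `f^[k] x` differs from `y` at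
some `u` with such an arc `u → v`. So a disagreement at time `n` gives a walk of `n` such arcs,
which on `n` vertices closes a cycle, and that cycle is positive. -/

def boolSign (b : Bool) : ℤ := if b then -1 else 1

@[simp]
lemma boolSign_mul_self (b : Bool) : boolSign b * boolSign b = 1 := by
  cases b <;> simp [boolSign]

lemma prod_boolSign_mul_boolSign_succ {m : ℕ} (b : Fin (m + 1) → Bool) :
    ∏ k, boolSign (b k) * boolSign (b (k + 1)) = 1 := by
  rw [Finset.prod_mul_distrib,
    Fintype.prod_equiv (Equiv.addRight 1) (fun k => boolSign (b (k + 1)))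
      (fun k => boolSign (b k)) fun _ => rfl,
    ← Finset.prod_mul_distrib]
  simp

lemma arcSign_of_apply_update_ne {n : ℕ} {f : BNState n → BNState n} {x : BNState n}
    {u v : Fin n} (h : f (Function.update x u (!x u)) v ≠ f x v) :
    arcSign f u v (boolSign (x u) * boolSign (f x v)) := by
  cases hxu : x u
  · rw [hxu, Bool.not_false] at h
    cases hfx : f x v <;> rw [hfx] at h <;> simp only [Bool.not_eq_false, Bool.not_eq_true] at h
    · exact Or.inl ⟨by simp [boolSign], x, hxu, hfx, h⟩
    · exact Or.inr ⟨by simp [boolSign], x, hxu, hfx, h⟩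
  · rw [hxu, Bool.not_true] at h
    have hx : Function.update (Function.update x u false) u true = x := by
      rw [Function.update_idem, ← hxu, Function.update_eq_self]
    cases hfx : f x v <;> rw [hfx] at h <;> simp only [Bool.not_eq_false, Bool.not_eq_true] at h
    · exact Or.inr ⟨by simp [boolSign], _, Function.update_self .., h, by rw [hx, hfx]⟩
    · exact Or.inl ⟨by simp [boolSign], _, Function.update_self .., h, by rw [hx, hfx]⟩

/-- Moving from `y` to `z` one differing coordinate at a time, the first flip that changes
the value at `v` yields the arc. -/
lemma exists_arcSign_of_apply_ne {n : ℕ} {f : BNState n → BNState n} {y z : BNState n}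
    {v : Fin n} (hyv : f y v = y v) (hzv : f z v ≠ y v) :
    ∃ u, z u ≠ y u ∧ arcSign f u v (boolSign (y u) * boolSign (y v)) := by
  suffices ∀ s : Finset (Fin n), ∀ z : BNState n, (∀ u ∉ s, z u = y u) → f z v ≠ y v →
      ∃ u, z u ≠ y u ∧ arcSign f u v (boolSign (y u) * boolSign (y v)) from
    this Finset.univ z (by simp) hzv
  intro s
  induction s using Finset.induction_on with
  | empty =>
    intro z hz hzv
    rw [funext fun u => hz u (Finset.notMem_empty u), hyv] at hzv
    exact absurd rfl hzv
  | insert a s _ ih =>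
    intro z hz hzv
    set z' := Function.update z a (y a)
    have hz's : ∀ u ∉ s, z' u = y u := fun u hu => by
      by_cases hua : u = a
      · simp [z', hua]
      · simp [z', hua, hz u (by simp [hua, hu])]
    by_cases hz'v : f z' v = y v
    · have hza : z a ≠ y a := fun hza => by
        rw [show z' = z by simp [z', ← hza]] at hz'v
        exact hzv hz'v
      have hz : Function.update z' a (!z' a) = z := by
        simp only [z', Function.update_idem, Function.update_self]
        rw [← Bool.eq_not.mpr hza, Function.update_eq_self]
      refine ⟨a, hza, ?_⟩
      have harc := arcSign_of_apply_update_ne (f := f) (x := z') (u := a) (v := v)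
        (by rwa [hz, hz'v])
      rwa [show z' a = y a from Function.update_self .., hz'v] at harc
    · obtain ⟨u, hu, harc⟩ := ih z' hz's hz'v
      have hua : u ≠ a := by rintro rfl; simp [z'] at hu
      exact ⟨u, by simpa [z', hua] using hu, harc⟩

lemma exists_walk_of_forall_exists_pred {α : Type*} (R : α → α → Prop) (S : ℕ → Set α)
    (hS : ∀ k, ∀ v ∈ S (k + 1), ∃ u ∈ S k, R u v) :
    ∀ k, ∀ v ∈ S k, ∃ w : ℕ → α, w k = v ∧ ∀ j < k, R (w j) (w (j + 1)) := by
  intro k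
  induction k with
  | zero => exact fun v _ => ⟨fun _ => v, rfl, by simp⟩
  | succ k ih =>
    intro v hv
    obtain ⟨u, hu, huv⟩ := hS k v hv
    obtain ⟨w, hwk, hw⟩ := ih u hu
    refine ⟨Function.update w (k + 1) v, by simp, fun j hj => ?_⟩
    rcases Nat.lt_succ_iff_lt_or_eq.mp hj with hj | rfl
    · rw [Function.update_of_ne (by omega), Function.update_of_ne (by omega)]
      exact hw j hj
    · simpa [hwk] using huv

/-- The segment of a walk between the first repeated vertex and its earlier occurrence. -/
lemma exists_injective_cycle_of_walk {α : Type*} [Fintype α] (R : α → α → Prop) (w : ℕ → α)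
    (hw : ∀ j < Fintype.card α, R (w j) (w (j + 1))) :
    ∃ (m : ℕ) (V : Fin (m + 1) → α), Function.Injective V ∧ ∀ k, R (V k) (V (k + 1)) := by
  have hrep : ∃ j ≤ Fintype.card α, ∃ i < j, w i = w j := by
    obtain ⟨a, b, hab, heq⟩ := Fintype.exists_ne_map_eq_of_card_lt
      (fun k : Fin (Fintype.card α + 1) => w k) (by simp)
    rcases Fin.lt_or_lt_of_ne hab with h | h
    · exact ⟨b, b.is_le, a, h, heq⟩
    · exact ⟨a, a.is_le, b, h, heq.symm⟩
  classical
  obtain ⟨hjcard, i, hij, hwij⟩ := Nat.find_spec hrep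
  set j := Nat.find hrep
  have hinj : ∀ a b, a < j → b < j → w a = w b → a = b := fun a b ha hb hab => by
    by_contra hne
    rcases Nat.lt_or_gt_of_ne hne with h | h
    · exact Nat.find_min hrep hb ⟨by omega, a, h, hab⟩
    · exact Nat.find_min hrep ha ⟨by omega, b, h, hab.symm⟩
  refine ⟨j - i - 1, fun k => w (i + k), fun a b hab => Fin.ext ?_, fun k => ?_⟩
  · have := hinj _ _ (by omega) (by omega) hab
    omega
  · show R (w (i + k)) (w (i + (k + 1 : Fin _)))
    rw [Fin.val_add_one]
    split_ifs with hk
    · subst hk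
      have := hw (i + (j - i - 1)) (by omega)
      rwa [show i + (j - i - 1) + 1 = j by omega, ← hwij] at this
    · have hk' : (k : ℕ) < j - i - 1 := by
        have := k.isLt
        have : (k : ℕ) ≠ j - i - 1 := fun h => hk (Fin.ext h)
        omega
      exact hw (i + k) (by omega)

/-- If `f` has no positive cycles and has a fixed point `y`,
then `f^⟨n⟩(x) = y` for every state `x`. -/
theorem iterate_n_eq_fixedPoint {n : ℕ} (f : BNState n → BNState n)
    (hpos : ¬ hasPosCycleOutside f (∅ : Set (Fin n)))
    (y : BNState n) (hy : f y = y) :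
    ∀ x : BNState n, f^[n] x = y := by
  intro x
  by_contra hne
  obtain ⟨v, hv⟩ := Function.ne_iff.mp hne
  let R (a b : Fin n) : Prop := arcSign f a b (boolSign (y a) * boolSign (y b))
  obtain ⟨w, -, hw⟩ := exists_walk_of_forall_exists_pred R (fun k => {u | f^[k] x u ≠ y u})
    (fun k v hv => exists_arcSign_of_apply_ne (congrFun hy v)
      (by rwa [Function.iterate_succ_apply'] at hv)) n v hv
  obtain ⟨m, V, hV, hR⟩ := exists_injective_cycle_of_walk R w (by simpa using hw)
  exact hpos ⟨m, V, fun k => boolSign (y (V k)) * boolSign (y (V (k + 1))), hV,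
    fun _ => Set.notMem_empty _, hR, prod_boolSign_mul_boolSign_succ (y ∘ V)⟩
end

section
/- Let f be a Boolean network without positive cycles in its interaction graph. If f has a fixed point y, then there exists a permutation π = (π_1,…,π_n) of [n] such that the sequential update f^π := f^{π_n} ∘ ⋯ ∘ f^{π_1} satisfies f^π(x) = y for every x ∈ {0,1}^n. -/
open scoped Classical

/-! ### Auxiliary development -/

def eps (b : Bool) : ℤ := if b then 1 else -1

lemma eps_mul_self (b : Bool) : eps b * eps b = 1 := by cases b <;> simp [eps]

lemma IC_succ_fst {n : ℕ} (f : BNState n → BNState n) (k : ℕ) :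
    (IC f (k+1)).1 = {v | ∀ x z, fI f k x v = fI f k z v} := rfl

lemma IC_succ_snd {n : ℕ} (f : BNState n → BNState n) (k : ℕ) :
    (IC f (k+1)).2 = fun v => fI f k (fun _ => false) v := rfl

/-- The hypercube path lemma: if `F z v ≠ F w v` then there is an arc `u → v`
whose sign is determined by `w u` and `F w v`. -/
lemma path_lemma {n : ℕ} (F : BNState n → BNState n) (v : Fin n) :
    ∀ (N : ℕ) (w z : BNState n),
      (Finset.univ.filter fun u => z u ≠ w u).card ≤ N →
      F z v ≠ F w v →
      ∃ u, z u ≠ w u ∧ arcSign F u v (eps (w u) * eps (F w v)) := by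
  intro N
  induction N with
  | zero =>
      intro w z hcard hne
      exfalso
      apply hne
      have hzw : z = w := by
        funext u
        by_contra hu
        have hmem : u ∈ Finset.univ.filter fun u => z u ≠ w u := by simp [hu]
        have := Finset.card_pos.mpr ⟨u, hmem⟩
        omega
      rw [hzw]
  | succ N ih =>
      intro w z hcard hne
      have hzw : z ≠ w := fun h => hne (by rw [h])
      have hex : ∃ u, z u ≠ w u := by
        by_contra h
        push_neg at h
        exact hzw (funext h)
      obtain ⟨u, hu⟩ := hex
      by_cases h' : F (Function.update w u (z u)) v = F w v
      · -- the flip at `u` does not change the value: recurse with `w' = update w u (z u)`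
        set w' := Function.update w u (z u) with hw'
        have hcard' : (Finset.univ.filter fun u' => z u' ≠ w' u').card ≤ N := by
          have hsub : (Finset.univ.filter fun u' => z u' ≠ w' u') ⊆
              (Finset.univ.filter fun u' => z u' ≠ w u').erase u := by
            intro a ha
            simp only [Finset.mem_filter, Finset.mem_univ, true_and] at ha
            have hau : a ≠ u := by
              intro h; subst h; exact ha (by simp [hw'])
            refine Finset.mem_erase.mpr ⟨hau, ?_⟩
            simp only [Finset.mem_filter, Finset.mem_univ, true_and]
            rwa [hw', Function.update_of_ne hau] at ha
          have h1 := Finset.card_le_card hsub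
          have hmem : u ∈ Finset.univ.filter fun u' => z u' ≠ w u' := by simp [hu]
          have h2 := Finset.card_erase_of_mem hmem
          omega
        have hne' : F z v ≠ F w' v := by rw [h']; exact hne
        obtain ⟨u', hu', harc⟩ := ih w' z hcard' hne'
        have huu : u' ≠ u := by
          intro h; subst h; exact hu' (by simp [hw'])
        refine ⟨u', ?_, ?_⟩
        · rwa [hw', Function.update_of_ne huu] at hu'
        · rwa [hw', Function.update_of_ne huu, h'] at harc
      · -- the flip at `u` changes the value: `u` is the desired arc source
        refine ⟨u, hu, ?_⟩
        have hzu : z u = !(w u) := by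
          cases h1 : w u <;> cases h2 : z u <;> simp_all
        rw [hzu] at h'
        cases hwu : w u with
        | false =>
            rw [hwu] at h'
            cases ha : F w v with
            | false =>
                refine Or.inl ⟨by norm_num [hwu, ha, eps], w, hwu, ha, ?_⟩
                simp only [ha] at h'
                simpa using h'
            | true =>
                refine Or.inr ⟨by norm_num [hwu, ha, eps], w, hwu, ha, ?_⟩
                simp only [ha] at h'
                simpa using h'
        | true =>
            rw [hwu] at h'
            have hupd : Function.update (Function.update w u false) u true = w := by
              funext a
              by_cases hau : a = u
              · subst hau; simp [hwu]
              · simp [Function.update_of_ne hau]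
            cases ha : F w v with
            | false =>
                refine Or.inr ⟨by norm_num [hwu, ha, eps], Function.update w u false, by simp, ?_, ?_⟩
                · simp only [ha] at h'
                  simpa using h'
                · rw [hupd]; exact ha
            | true =>
                refine Or.inl ⟨by norm_num [hwu, ha, eps], Function.update w u false, by simp, ?_, ?_⟩
                · simp only [ha] at h'
                  simpa using h'
                · rw [hupd]; exact ha

section Fixed

variable {n : ℕ} (f : BNState n → BNState n) (y : BNState n)

lemma fI_y_of (k : ℕ) (hy : f y = y)
    (hc : ∀ v ∈ (IC f k).1, (IC f k).2 v = y v) : fI f k y = y := by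
  have : (fun u => if u ∈ (IC f k).1 then (IC f k).2 u else y u) = y := by
    funext u
    by_cases hu : u ∈ (IC f k).1
    · simp [hu, hc u hu]
    · simp [hu]
  rw [fI, this, hy]

lemma c_eq (hy : f y = y) : ∀ k, ∀ v ∈ (IC f k).1, (IC f k).2 v = y v := by
  intro k
  induction k with
  | zero => intro v hv; exact absurd hv (by simp [IC])
  | succ k ih =>
      intro v hv
      rw [IC_succ_fst] at hv
      have h1 : (IC f (k+1)).2 v = fI f k (fun _ => false) v := rfl
      rw [h1, hv (fun _ => false) y, fI_y_of f y k hy ih]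

lemma I_mono (hy : f y = y) : ∀ k, (IC f k).1 ⊆ (IC f (k+1)).1 := by
  intro k
  induction k with
  | zero => intro v hv; exact absurd hv (by simp [IC])
  | succ k ih =>
      intro v hv
      rw [IC_succ_fst] at hv
      rw [IC_succ_fst]
      intro x z
      have collapse : ∀ x : BNState n, fI f (k+1) x =
          fI f k (fun u => if u ∈ (IC f (k+1)).1 then (IC f (k+1)).2 u else x u) := by
        intro x
        have hAB : (fun u => if u ∈ (IC f k).1 then (IC f k).2 u
              else (if u ∈ (IC f (k+1)).1 then (IC f (k+1)).2 u else x u))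
            = (fun u => if u ∈ (IC f (k+1)).1 then (IC f (k+1)).2 u else x u) := by
          funext u
          by_cases h1 : u ∈ (IC f k).1
          · have h2 : u ∈ (IC f (k+1)).1 := ih h1
            rw [if_pos h1, if_pos h2, c_eq f y hy k u h1, c_eq f y hy (k+1) u h2]
          · rw [if_neg h1]
        simp only [fI]
        rw [hAB]
      rw [collapse x, collapse z]
      exact hv _ _

lemma I_mono_le (hy : f y = y) {k l : ℕ} (hkl : k ≤ l) : (IC f k).1 ⊆ (IC f l).1 := by
  induction l with
  | zero => have : k = 0 := by omega
            subst this; exact subset_rfl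
  | succ l ih =>
      rcases Nat.eq_or_lt_of_le hkl with h | h
      · subst h; exact subset_rfl
      · exact (ih (by omega)).trans (I_mono f y hy l)

end Fixed

lemma override_update {n : ℕ} (f : BNState n → BNState n) (k : ℕ) {u : Fin n}
    (hu : u ∉ (IC f k).1) (x : BNState n) (b : Bool) :
    (fun u' => if u' ∈ (IC f k).1 then (IC f k).2 u' else Function.update x u b u')
      = Function.update (fun u' => if u' ∈ (IC f k).1 then (IC f k).2 u' else x u') u b := by
  funext u'
  by_cases h : u' = u
  · subst h; simp [hu]
  · simp [Function.update_of_ne h]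

lemma arc_transfer {n : ℕ} (f : BNState n → BNState n) (k : ℕ) (u v : Fin n) (s : ℤ) :
    arcSign (fI f k) u v s → u ∉ (IC f k).1 ∧ arcSign f u v s := by
  have hIgn : u ∈ (IC f k).1 → ∀ x : BNState n,
      fI f k (Function.update x u true) = fI f k x := by
    intro hu x
    have hAB : (fun u' => if u' ∈ (IC f k).1 then (IC f k).2 u' else Function.update x u true u')
        = (fun u' => if u' ∈ (IC f k).1 then (IC f k).2 u' else x u') := by
      funext u'
      by_cases h : u' = u
      · subst h; rw [if_pos hu, if_pos hu]
      · rw [Function.update_of_ne h]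
    simp only [fI]
    rw [hAB]
  rintro (⟨hs, x, hx0, hx1, hx2⟩ | ⟨hs, x, hx0, hx1, hx2⟩)
  · have hu : u ∉ (IC f k).1 := by
      intro hu
      rw [hIgn hu x, hx1] at hx2
      simp at hx2
    refine ⟨hu, Or.inl ⟨hs, (fun u' => if u' ∈ (IC f k).1 then (IC f k).2 u' else x u'),
      by simp [hu, hx0], hx1, ?_⟩⟩
    rw [← override_update f k hu x true]
    exact hx2
  · have hu : u ∉ (IC f k).1 := by
      intro hu
      rw [hIgn hu x, hx1] at hx2
      simp at hx2
    refine ⟨hu, Or.inr ⟨hs, (fun u' => if u' ∈ (IC f k).1 then (IC f k).2 u' else x u'),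
      by simp [hu, hx0], hx1, ?_⟩⟩
    rw [← override_update f k hu x true]
    exact hx2

/-- From an infinite backwards chain of arcs with signs `ε(y u)·ε(y v)`, extract a
positive cycle. -/
lemma cycle_of_chain {n : ℕ} (f : BNState n → BNState n) (y : BNState n) (w : ℕ → Fin n)
    (harc : ∀ m, arcSign f (w (m+1)) (w m) (eps (y (w (m+1))) * eps (y (w m))))
    (d i : ℕ) (hd : 0 < d) (hper : w (i + d) = w i)
    (hinj : ∀ a b, i ≤ a → a < b → b < i + d → w a ≠ w b) :
    hasPosCycleOutside f (∅ : Set (Fin n)) := by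
  obtain ⟨e, rfl⟩ : ∃ e, d = e + 1 := ⟨d - 1, by omega⟩
  set V : Fin (e+1) → Fin n := fun t => w (i + (e+1) - t.val) with hV
  refine ⟨e, V, fun t => eps (y (V t)) * eps (y (V (t+1))), ?_, by simp, ?_, ?_⟩
  · -- injectivity
    have key : ∀ a b : Fin (e+1), a.val < b.val → V a ≠ V b := by
      intro a b hab
      have hb1 : 1 ≤ b.val := by omega
      have hb2 : b.val ≤ e := by omega
      have hBlo : i + 1 ≤ i + (e+1) - b.val := by omega
      have hBhi : i + (e+1) - b.val ≤ i + e := by omega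
      by_cases ha0 : a.val = 0
      · have hVa : V a = w i := by
          rw [hV]; simp only [ha0]
          rw [show i + (e+1) - 0 = i + (e+1) from rfl, hper]
        rw [hVa]
        exact hinj i (i + (e+1) - b.val) le_rfl (by omega) (by omega)
      · have := hinj (i + (e+1) - b.val) (i + (e+1) - a.val) (by omega) (by omega) (by omega)
        exact fun h => this h.symm
    intro a b hab
    by_contra hne
    rcases lt_trichotomy a.val b.val with h | h | h
    · exact key a b h hab
    · exact hne (Fin.ext h)
    · exact key b a h hab.symm
  · -- arcs
    intro t
    show arcSign f (V t) (V (t+1)) (eps (y (V t)) * eps (y (V (t+1))))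
    by_cases ht : t.val = e
    · have h1 : i + (e+1) - t.val = i + 1 := by omega
      have hlast : t = Fin.last e := Fin.ext (by simp [ht])
      have h2 : ((t + 1 : Fin (e+1))).val = 0 := by
        rw [Fin.val_add_one, if_pos hlast]
      have hVt : V t = w (i + 1) := by rw [hV]; simp only [h1]
      have hVt1 : V (t+1) = w i := by
        rw [hV]; simp only [h2]
        rw [show i + (e+1) - 0 = i + (e+1) from rfl, hper]
      rw [hVt, hVt1]
      exact harc i
    · have htlt : t.val < e := lt_of_le_of_ne (Nat.lt_succ_iff.mp t.isLt) ht
      have h2 : ((t + 1 : Fin (e+1))).val = t.val + 1 := by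
        have hne : t ≠ Fin.last e := by
          intro h; rw [h] at ht; exact ht rfl
        rw [Fin.val_add_one, if_neg hne]
      have h1 : i + (e+1) - t.val = (i + e - t.val) + 1 := by omega
      have h3 : i + (e+1) - ((t + 1 : Fin (e+1))).val = i + e - t.val := by
        rw [h2]; omega
      have hVt : V t = w ((i + e - t.val) + 1) := by rw [hV]; simp only [h1]
      have hVt1 : V (t+1) = w (i + e - t.val) := by rw [hV]; simp only [h3]
      rw [hVt, hVt1]
      exact harc (i + e - t.val)
  · -- product of signs
    show (∏ t : Fin (e+1), (eps (y (V t)) * eps (y (V (t+1))))) = 1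
    have hdist : ∏ t : Fin (e+1), (eps (y (V t)) * eps (y (V (t+1))))
        = (∏ t : Fin (e+1), eps (y (V t))) * ∏ t : Fin (e+1), eps (y (V (t+1))) :=
      Finset.prod_mul_distrib
    have hre : ∏ t : Fin (e+1), eps (y (V (t+1))) = ∏ t : Fin (e+1), eps (y (V t)) :=
      Fintype.prod_equiv (Equiv.addRight (1 : Fin (e+1))) _ _ (fun t => rfl)
    rw [hdist, hre, ← Finset.prod_mul_distrib]
    rw [Finset.prod_congr rfl (fun t _ => eps_mul_self (y (V t)))]
    simp

/-- Growth lemma: as long as `I_k` is not everything, a new constant component appears. -/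
lemma exists_new {n : ℕ} (f : BNState n → BNState n)
    (hpos : ¬ hasPosCycleOutside f (∅ : Set (Fin n)))
    (y : BNState n) (hy : f y = y) (k : ℕ) (h : (IC f k).1 ≠ Set.univ) :
    ∃ v, v ∈ (IC f (k+1)).1 ∧ v ∉ (IC f k).1 := by
  by_contra hno
  push_neg at hno
  have key : ∀ v, v ∉ (IC f k).1 →
      ∃ u, u ∉ (IC f k).1 ∧ arcSign f u v (eps (y u) * eps (y v)) := by
    intro v hv
    have hv' : v ∉ (IC f (k+1)).1 := fun hmem => hv (hno v hmem)
    rw [IC_succ_fst] at hv'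
    simp only [Set.mem_setOf_eq, not_forall] at hv'
    obtain ⟨x, z, hxz⟩ := hv'
    have hyv : fI f k y v = y v := by
      rw [fI_y_of f y k hy (c_eq f y hy k)]
    have hzex : ∃ z, fI f k z v ≠ y v := by
      by_cases hx : fI f k x v = y v
      · exact ⟨z, fun hc => hxz (by rw [hx, hc])⟩
      · exact ⟨x, hx⟩
    obtain ⟨z', hzv⟩ := hzex
    obtain ⟨u, hu, harc⟩ := path_lemma (fI f k) v n y z'
      (le_trans (Finset.card_filter_le _ _) (by simp))
      (by rw [hyv]; exact hzv)
    rw [hyv] at harc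
    obtain ⟨hunotin, harc'⟩ := arc_transfer f k u v _ harc
    exact ⟨u, hunotin, harc'⟩
  obtain ⟨v0, hv0⟩ : ∃ v, v ∉ (IC f k).1 := by
    by_contra hall
    push_neg at hall
    exact h (Set.eq_univ_of_forall hall)
  choose U hU1 hU2 using key
  let T := {v : Fin n // v ∉ (IC f k).1}
  let Fn : T → T := fun t => ⟨U t.1 t.2, hU1 t.1 t.2⟩
  let wT : ℕ → T := fun m => Fn^[m] ⟨v0, hv0⟩
  have hwT : ∀ m, wT (m+1) = Fn (wT m) := fun m => Function.iterate_succ_apply' Fn m _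
  set w : ℕ → Fin n := fun m => (wT m).1 with hw
  have hstep : ∀ m, w (m+1) = U (w m) (wT m).2 := by
    intro m
    show (wT (m+1)).1 = _
    rw [hwT m]
  have harc : ∀ m, arcSign f (w (m+1)) (w m) (eps (y (w (m+1))) * eps (y (w m))) := by
    intro m
    rw [hstep m]
    exact hU2 _ _
  obtain ⟨a, b, hab, heq⟩ := Finite.exists_ne_map_eq_of_infinite w
  have hP : ∃ d, 0 < d ∧ ∃ i, w (i + d) = w i := by
    rcases lt_or_gt_of_ne hab with h' | h'
    · exact ⟨b - a, by omega, a, by rw [show a + (b - a) = b by omega]; exact heq.symm⟩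
    · exact ⟨a - b, by omega, b, by rw [show b + (a - b) = a by omega]; exact heq⟩
  set d := Nat.find hP with hdfind
  obtain ⟨hd0, i, hper⟩ := Nat.find_spec hP
  have hinj : ∀ a b, i ≤ a → a < b → b < i + d → w a ≠ w b := by
    intro a b ha hab' hb heqab
    have hPd : 0 < b - a ∧ ∃ j, w (j + (b - a)) = w j :=
      ⟨by omega, a, by rw [show a + (b - a) = b by omega]; exact heqab.symm⟩
    exact Nat.find_min hP (show b - a < d by omega) hPd
  exact hpos (cycle_of_chain f y w harc d i hd0 hper hinj)

lemma IC_univ {n : ℕ} (f : BNState n → BNState n)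
    (hpos : ¬ hasPosCycleOutside f (∅ : Set (Fin n)))
    (y : BNState n) (hy : f y = y) : (IC f n).1 = Set.univ := by
  have grow : ∀ k, (IC f k).1 = Set.univ ∨ k ≤ (IC f k).1.ncard := by
    intro k
    induction k with
    | zero => exact Or.inr (Nat.zero_le _)
    | succ k ih =>
        by_cases hk : (IC f k).1 = Set.univ
        · exact Or.inl (Set.eq_univ_of_univ_subset (hk ▸ I_mono f y hy k))
        · rcases ih with h | h
          · exact absurd h hk
          · obtain ⟨v, hv1, hv2⟩ := exists_new f hpos y hy k hk
            have hss : (IC f k).1 ⊂ (IC f (k+1)).1 :=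
              ⟨I_mono f y hy k, fun hsub => hv2 (hsub hv1)⟩
            have := Set.ncard_lt_ncard hss (Set.toFinite _)
            exact Or.inr (by omega)
  rcases grow n with h | h
  · exact h
  · have huniv : (Set.univ : Set (Fin n)).ncard = n := by
      rw [Set.ncard_univ]; simp
    apply Set.eq_of_subset_of_ncard_le (Set.subset_univ _) (by omega) (Set.toFinite _)

/-- The fold lemma: processing a rank-sorted list starting from any state yields `y`. -/
lemma fold_inv {n : ℕ} (f : BNState n → BNState n) (y : BNState n) (rank : Fin n → ℕ)
    (hsem : ∀ v z, (∀ u, rank u < rank v → z u = y u) → f z v = y v) :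
    ∀ (L : List (Fin n)) (z : BNState n),
      L.Pairwise (fun a b => rank a ≤ rank b) →
      (∀ u, u ∉ L → z u = y u) →
      L.foldl (fun z u => seqStep f u z) z = y := by
  intro L
  induction L with
  | nil =>
      intro z _ hz
      funext u
      exact hz u (by simp)
  | cons v L ih =>
      intro z hp hz
      have hp' := List.pairwise_cons.mp hp
      have hfz : f z v = y v := by
        apply hsem
        intro u hu
        apply hz
        intro hmem
        rcases List.mem_cons.mp hmem with rfl | hmem'
        · omega
        · exact absurd hu (not_lt.mpr (hp'.1 u hmem'))
      simp only [List.foldl_cons]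
      apply ih
      · exact hp'.2
      · intro u hu
        by_cases huv : u = v
        · subst huv
          simp [seqStep, hfz]
        · rw [seqStep, Function.update_of_ne huv]
          exact hz u (by simp [hu, huv])

/-- If `f` has no positive cycles and has a fixed point `y`, then there is a
sequential schedule `π` with `f^π(x) = y` for every state `x`. -/
theorem exists_seq_schedule_converging {n : ℕ} (f : BNState n → BNState n)
    (hpos : ¬ hasPosCycleOutside f (∅ : Set (Fin n)))
    (y : BNState n) (hy : f y = y) :
    ∃ π : Equiv.Perm (Fin n), ∀ x : BNState n, seqUpdate f π x = y := by
  have hex : ∀ v : Fin n, ∃ k, v ∈ (IC f k).1 := by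
    intro v
    exact ⟨n, by rw [IC_univ f hpos y hy]; trivial⟩
  set rank : Fin n → ℕ := fun v => Nat.find (hex v) with hrank
  have hrank_mem : ∀ v, v ∈ (IC f (rank v)).1 := fun v => Nat.find_spec (hex v)
  have hrank_le : ∀ v k, v ∈ (IC f k).1 → rank v ≤ k := fun v k h => Nat.find_min' _ h
  have hrank_pos : ∀ v, 0 < rank v := by
    intro v
    rcases Nat.eq_zero_or_pos (rank v) with h | h
    · exfalso
      have hmem := hrank_mem v
      rw [h] at hmem
      simp [IC] at hmem
    · exact h
  have hsem : ∀ v z, (∀ u, rank u < rank v → z u = y u) → f z v = y v := by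
    intro v z hz
    set k := rank v - 1 with hk
    have hv : v ∈ (IC f (k+1)).1 := by
      have := hrank_mem v
      rwa [show rank v = k + 1 by have := hrank_pos v; omega] at this
    have hzy : ∀ u ∈ (IC f k).1, z u = y u := by
      intro u hu
      apply hz
      have h1 := hrank_le u k hu
      have := hrank_pos v
      omega
    have h1 : (fun u => if u ∈ (IC f k).1 then (IC f k).2 u else z u) = z := by
      funext u
      by_cases hu : u ∈ (IC f k).1
      · simp [hu, c_eq f y hy k u hu, hzy u hu]
      · simp [hu]
    rw [IC_succ_fst] at hv
    calc f z v = fI f k z v := by rw [fI, h1]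
      _ = fI f k y v := hv z y
      _ = y v := by rw [fI_y_of f y k hy (c_eq f y hy k)]
  refine ⟨Tuple.sort rank, ?_⟩
  intro x
  have hmono := Tuple.monotone_sort rank
  rw [seqUpdate]
  apply fold_inv f y rank hsem
  · rw [List.pairwise_ofFn]
    intro i j hij
    exact hmono (le_of_lt hij)
  · intro u hu
    exfalso
    apply hu
    rw [List.mem_ofFn]
    exact ⟨(Tuple.sort rank).symm u, Equiv.apply_symm_apply _ _⟩
end

section
/- Let f be a Boolean network without positive cycles, F a feedback vertex set of G(f), and π an order compatible with F. Then y is the unique fixed point of f if and only if (f^π)^⟨|F|+1⟩(x) = y for all x ∈ {0,1}^n. -/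
open scoped Classical

namespace BNAux
variable {n : ℕ}

def arcTo (f : BNState n → BNState n) (u v : Fin n) : Prop := posArc f u v ∨ negArc f u v

lemma arc_of_flip (f : BNState n → BNState n) {u v : Fin n} {x : BNState n}
    (hx : x u = false) (hne : f x v ≠ f (Function.update x u true) v) : arcTo f u v := by
  cases h1 : f x v
  · left; exact ⟨x, hx, h1, by
      cases h2 : f (Function.update x u true) v
      · exact absurd (h1.trans h2.symm) hne
      · rfl⟩
  · right; exact ⟨x, hx, h1, by
      cases h2 : f (Function.update x u true) v
      · rfl
      · exact absurd (h1.trans h2.symm) hne⟩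

lemma arc_of_pair (f : BNState n → BNState n) {v a : Fin n} {x x' : BNState n}
    (hne : x a ≠ x' a) (hagree : ∀ u, u ≠ a → x u = x' u)
    (hv : f x v ≠ f x' v) : arcTo f a v := by
  cases hxa : x a
  · have : x' = Function.update x a true := by
      funext u
      by_cases hu : u = a
      · subst hu
        simp only [Function.update_self]
        cases h : x' u
        · rw [hxa] at hne; exact absurd h.symm (by simpa [h] using hne)
        · rfl
      · rw [Function.update_of_ne hu, hagree u hu]
    rw [this] at hv
    exact arc_of_flip f hxa hv
  · have hx'a : x' a = false := by
      cases h : x' a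
      · rfl
      · exact absurd (hxa.trans h.symm) hne
    have : x = Function.update x' a true := by
      funext u
      by_cases hu : u = a
      · subst hu; simp [Function.update_self, hxa]
      · rw [Function.update_of_ne hu, hagree u hu]
    rw [this] at hv
    exact arc_of_flip f hx'a hv.symm

lemma arc_of_ne (f : BNState n → BNState n) {v : Fin n} {x x' : BNState n}
    (hv : f x v ≠ f x' v) : ∃ u, x u ≠ x' u ∧ arcTo f u v := by
  classical
  have main : ∀ (s : Finset (Fin n)) (x : BNState n), (∀ u, u ∉ s → x u = x' u) →
      f x v ≠ f x' v → ∃ u, x u ≠ x' u ∧ arcTo f u v := by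
    intro s
    induction s using Finset.induction_on with
    | empty =>
      intro x hx hne
      exact absurd (funext fun u => hx u (Finset.notMem_empty u) : x = x') (by
        intro h; rw [h] at hne; exact hne rfl)
    | @insert a s ha ih =>
      intro x hx hne
      by_cases hxa : x a = x' a
      · refine ih x ?_ hne
        intro u hu
        by_cases hua : u = a
        · subst hua; exact hxa
        · exact hx u (by simp [hua, hu])
      · set x'' := Function.update x a (x' a) with hx''
        by_cases h2 : f x'' v = f x' v
        · have hne2 : f x v ≠ f x'' v := by rw [h2]; exact hne
          refine ⟨a, hxa, arc_of_pair f ?_ ?_ hne2⟩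
          · simp [hx'', Function.update_self]; exact hxa
          · intro u hu; simp [hx'', Function.update_of_ne hu]
        · obtain ⟨u, hu1, hu2⟩ := ih x'' (by
            intro u hu
            by_cases hua : u = a
            · subst hua; simp [hx'', Function.update_self]
            · rw [hx'', Function.update_of_ne hua]
              exact hx u (by simp [hua, hu])) h2
          have hua : u ≠ a := by
            intro h; subst h; simp [hx'', Function.update_self] at hu1
          refine ⟨u, ?_, hu2⟩
          rwa [hx'', Function.update_of_ne hua] at hu1
  exact main Finset.univ x (fun u hu => absurd (Finset.mem_univ u) hu) hv

lemma eq_of_agree (f : BNState n → BNState n) {v : Fin n} {x x' : BNState n}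
    (h : ∀ u, arcTo f u v → x u = x' u) : f x v = f x' v := by
  by_contra hne
  obtain ⟨u, hu1, hu2⟩ := arc_of_ne f hne
  exact hu1 (h u hu2)


/-- If `φ 0 = false` and `φ x = true`, some upward flip inside `supp x` turns `φ` on. -/
lemma exists_up_flip (φ : BNState n → Bool) (hbase : φ (fun _ => false) = false) :
    ∀ (x : BNState n), φ x = true →
      ∃ u z, x u = true ∧ z u = false ∧ φ z = false ∧ φ (Function.update z u true) = true := by
  classical
  have main : ∀ (N : ℕ) (x : BNState n), (Finset.univ.filter fun u => x u = true).card ≤ N →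
      φ x = true →
      ∃ u z, x u = true ∧ z u = false ∧ φ z = false ∧ φ (Function.update z u true) = true := by
    intro N
    induction N with
    | zero =>
      intro x hcard hx
      have : x = fun _ => false := by
        funext u
        by_contra hu
        have : u ∈ Finset.univ.filter fun u => x u = true := by
          simp only [Finset.mem_filter, Finset.mem_univ, true_and]
          cases h : x u
          · exact absurd h hu
          · rfl
        have := Finset.card_pos.mpr ⟨u, this⟩
        omega
      rw [this, hbase] at hx; exact absurd hx (by simp)
    | succ N ih =>
      intro x hcard hx
      by_cases hzero : x = fun _ => false
      · rw [hzero, hbase] at hx; exact absurd hx (by simp)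
      · have : ∃ u, x u = true := by
          by_contra h
          push_neg at h
          exact hzero (funext fun u => by cases hu : x u; rfl; exact absurd hu (by simp [h u]))
        obtain ⟨u, hu⟩ := this
        set x' := Function.update x u false with hx'
        by_cases h2 : φ x' = true
        · have hsub : (Finset.univ.filter fun w => x' w = true) ⊆
              (Finset.univ.filter fun w => x w = true).erase u := by
            intro w hw
            simp only [Finset.mem_filter, Finset.mem_univ, true_and] at hw
            have hwu : w ≠ u := by
              intro h; subst h; simp [hx', Function.update_self] at hw
            rw [hx', Function.update_of_ne hwu] at hw
            exact Finset.mem_erase.mpr ⟨hwu, by simp [hw]⟩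
          have hc2 : (Finset.univ.filter fun w => x' w = true).card ≤ N := by
            have h1 := Finset.card_le_card hsub
            have h2 := Finset.card_erase_of_mem (a := u)
              (s := Finset.univ.filter fun w => x w = true) (by simp [hu])
            omega
          obtain ⟨w, z, hw1, hrest⟩ := ih x' hc2 h2
          have hwu : w ≠ u := by
            intro h; subst h; simp [hx', Function.update_self] at hw1
          exact ⟨w, z, by rwa [hx', Function.update_of_ne hwu] at hw1, hrest⟩
        · refine ⟨u, x', hu, by simp [hx', Function.update_self], by
            cases h : φ x'; rfl; exact absurd h h2, ?_⟩
          have : Function.update x' u true = x := by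
            funext w
            by_cases hw : w = u
            · subst hw; simp [Function.update_self, hu]
            · simp [Function.update_of_ne hw, hx']
          rwa [this]
  intro x hx
  exact main _ x le_rfl hx

/-- Extract a simple cycle from a predecessor relation on a nonempty set. -/
lemma exists_cycle {R : Set (Fin n)} {A : Fin n → Fin n → Prop}
    (hne : R.Nonempty) (hpred : ∀ v ∈ R, ∃ u ∈ R, A u v) :
    ∃ (m : ℕ) (w : Fin (m+1) → Fin n), Function.Injective w ∧ (∀ i, w i ∈ R) ∧
      (∀ i, A (w i) (w (i+1))) := by
  classical
  obtain ⟨v0, hv0⟩ := hne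
  -- predecessor chain in the subtype
  have pred : ∀ v : {v // v ∈ R}, ∃ u : {v // v ∈ R}, A u.1 v.1 := by
    intro v
    obtain ⟨u, hu, hA⟩ := hpred v.1 v.2
    exact ⟨⟨u, hu⟩, hA⟩
  choose p hp using pred
  let Q : ℕ → {v // v ∈ R} := fun k => p^[k] ⟨v0, hv0⟩
  have hQsucc : ∀ k, Q (k+1) = p (Q k) := fun k => Function.iterate_succ_apply' p k _
  have hQA : ∀ k, A (Q (k+1)).1 (Q k).1 := fun k => by rw [hQsucc]; exact hp (Q k)
  let q : ℕ → Fin n := fun k => (Q k).1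
  -- pigeonhole
  have hpig : ∃ a b : Fin (n+1), a ≠ b ∧ q a.1 = q b.1 := by
    have := Fintype.exists_ne_map_eq_of_card_lt (fun i : Fin (n+1) => q i.1) (by simp)
    obtain ⟨a, b, hab, h⟩ := this
    exact ⟨a, b, hab, h⟩
  have hP : ∃ k, ∃ j, j < k ∧ q j = q k := by
    obtain ⟨a, b, hab, h⟩ := hpig
    rcases lt_or_gt_of_ne (fun h' : a = b => hab h') with h1 | h1
    · exact ⟨b.1, a.1, h1, h⟩
    · exact ⟨a.1, b.1, h1, h.symm⟩
  let k0 := Nat.find hP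
  obtain ⟨j0, hj0lt, hj0eq⟩ : ∃ j, j < k0 ∧ q j = q k0 := Nat.find_spec hP
  have hinj : ∀ a b, j0 ≤ a → a < b → b < k0 → q a ≠ q b := by
    intro a b ha hab hb heq
    exact Nat.find_min hP hb ⟨a, hab, heq⟩
  have hk0pos : 1 ≤ k0 := by omega
  refine ⟨k0 - 1 - j0, fun i => q (k0 - 1 - i.1), ?_, fun i => (Q _).2, ?_⟩
  · intro i i' h
    have hi : i.1 ≤ k0 - 1 - j0 := Nat.lt_succ_iff.mp i.2
    have hi' : i'.1 ≤ k0 - 1 - j0 := Nat.lt_succ_iff.mp i'.2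
    have hb1 : j0 ≤ k0 - 1 - i.1 := by omega
    have hb2 : j0 ≤ k0 - 1 - i'.1 := by omega
    have : k0 - 1 - i.1 = k0 - 1 - i'.1 := by
      by_contra hne'
      rcases Nat.lt_or_ge (k0 - 1 - i.1) (k0 - 1 - i'.1) with hlt | hge
      · exact hinj _ _ hb1 hlt (by omega) h
      · exact hinj _ _ hb2 (by omega) (by omega) h.symm
    exact Fin.ext (by omega)
  · intro i
    by_cases hlast : i.1 = k0 - 1 - j0
    · have h1 : (i + 1).1 = 0 := by
        simp [Fin.add_def, hlast]
      have h2 : k0 - 1 - i.1 = j0 := by omega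
      show A (q (k0 - 1 - i.1)) (q (k0 - 1 - (i+1).1))
      rw [h1, h2, hj0eq]
      have : k0 = (k0 - 1) + 1 := by omega
      rw [this]
      simpa using hQA (k0 - 1)
    · have hi : i.1 < k0 - 1 - j0 := by
        have := Nat.lt_succ_iff.mp i.2
        omega
      have h1 : (i + 1).1 = i.1 + 1 := by
        simp [Fin.add_def]
        omega
      show A (q (k0 - 1 - i.1)) (q (k0 - 1 - (i+1).1))
      rw [h1]
      have h2 : k0 - 1 - i.1 = (k0 - 1 - (i.1 + 1)) + 1 := by omega
      rw [h2]
      exact hQA _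

section Clamp
variable (f : BNState n → BNState n) (y : BNState n)

/-- Clamp the coordinates in `A` to the values of `y`. -/
def clamp (A : Finset (Fin n)) (x : BNState n) : BNState n :=
  fun u => if u ∈ A then y u else x u

def gcl (A : Finset (Fin n)) : BNState n → BNState n := fun x => f (clamp y A x)

def ConstComp (A : Finset (Fin n)) (v : Fin n) : Prop :=
  ∀ x₁ x₂, gcl f y A x₁ v = gcl f y A x₂ v

lemma clamp_y (A : Finset (Fin n)) : clamp y A y = y := by
  funext u; simp [clamp]

lemma gcl_y (A : Finset (Fin n)) (hyfix : f y = y) : gcl f y A y = y := by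
  rw [gcl, clamp_y, hyfix]

lemma clamp_clamp {A B : Finset (Fin n)} (hAB : A ⊆ B) (x : BNState n) :
    clamp y A (clamp y B x) = clamp y B x := by
  funext u
  by_cases hu : u ∈ A
  · simp [clamp, hu, hAB hu]
  · simp [clamp, hu]

lemma constComp_mono {A B : Finset (Fin n)} (hAB : A ⊆ B) {v : Fin n}
    (h : ConstComp f y A v) : ConstComp f y B v := by
  intro x₁ x₂
  have e : ∀ x, gcl f y B x v = gcl f y A (clamp y B x) v := by
    intro x
    show f (clamp y B x) v = f (clamp y A (clamp y B x)) v
    rw [clamp_clamp y hAB]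
  rw [e x₁, e x₂]
  exact h _ _

lemma clamp_update {A : Finset (Fin n)} {u : Fin n} (hu : u ∉ A) (x : BNState n) (b : Bool) :
    clamp y A (Function.update x u b) = Function.update (clamp y A x) u b := by
  funext w
  by_cases hw : w = u
  · subst hw; simp [clamp, hu, Function.update_self]
  · simp [clamp, Function.update_of_ne hw]

lemma posArc_gcl {A : Finset (Fin n)} {u v : Fin n} (hu : u ∉ A)
    (h : posArc (gcl f y A) u v) : posArc f u v := by
  obtain ⟨x, h1, h2, h3⟩ := h
  refine ⟨clamp y A x, by simp [clamp, hu, h1], h2, ?_⟩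
  rw [← clamp_update y hu]
  exact h3

lemma negArc_gcl {A : Finset (Fin n)} {u v : Fin n} (hu : u ∉ A)
    (h : negArc (gcl f y A) u v) : negArc f u v := by
  obtain ⟨x, h1, h2, h3⟩ := h
  refine ⟨clamp y A x, by simp [clamp, hu, h1], h2, ?_⟩
  rw [← clamp_update y hu]
  exact h3

lemma gcl_indep {A : Finset (Fin n)} {u : Fin n} (hu : u ∈ A) (x : BNState n) (b : Bool) :
    gcl f y A (Function.update x u b) = gcl f y A x := by
  have e : clamp y A (Function.update x u b) = clamp y A x := by
    funext w
    by_cases hw : w = u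
    · subst hw; simp only [clamp, if_pos hu]
    · simp only [clamp, Function.update_of_ne hw]
  show f _ = f _
  rw [e]

lemma arcTo_gcl {A : Finset (Fin n)} {u v : Fin n} (h : arcTo (gcl f y A) u v) :
    u ∉ A ∧ arcTo f u v := by
  have hu : u ∉ A := by
    intro hu
    rcases h with ⟨x, _, h2, h3⟩ | ⟨x, _, h2, h3⟩ <;>
      rw [gcl_indep f y hu] at h3 <;> rw [h2] at h3 <;> simp at h3
  exact ⟨hu, h.imp (posArc_gcl f y hu) (negArc_gcl f y hu)⟩

/-- If `x` agrees with `y` on the in-neighbours of `v` lying in `A`, then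
`f x v` equals the clamped value. -/
lemma f_eq_gcl {A : Finset (Fin n)} {v : Fin n} {x : BNState n}
    (h : ∀ u ∈ A, arcTo f u v → x u = y u) : f x v = gcl f y A x v := by
  apply eq_of_agree
  intro u hu
  by_cases huA : u ∈ A
  · simp [clamp, huA, h u huA hu]
  · simp [clamp, huA]

/-- The switched network `x ↦ g(x ⊕ y) ⊕ y`. -/
def hatg (A : Finset (Fin n)) : BNState n → BNState n :=
  fun x v => xor (gcl f y A (fun w => xor (x w) (y w)) v) (y v)

lemma hatg_zero (A : Finset (Fin n)) (hyfix : f y = y) (v : Fin n) :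
    hatg f y A (fun _ => false) v = false := by
  have : (fun w => xor false (y w)) = y := by funext w; simp
  rw [hatg, this, gcl_y f y A hyfix]
  simp

lemma hatg_exists_true {A : Finset (Fin n)} {v : Fin n} (hnc : ¬ ConstComp f y A v)
    (hyfix : f y = y) : ∃ x, hatg f y A x v = true := by
  rw [ConstComp] at hnc
  push_neg at hnc
  obtain ⟨x₁, x₂, hne⟩ := hnc
  have : gcl f y A x₁ v ≠ y v ∨ gcl f y A x₂ v ≠ y v := by
    by_contra h
    push_neg at h
    rw [h.1, h.2] at hne
    exact hne rfl
  rcases this with h | h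
  · refine ⟨fun w => xor (x₁ w) (y w), ?_⟩
    have e : (fun w => xor (xor (x₁ w) (y w)) (y w)) = x₁ := by
      funext w; cases x₁ w <;> cases y w <;> rfl
    rw [hatg, e]
    cases hg : gcl f y A x₁ v <;> cases hy : y v <;> simp_all
  · refine ⟨fun w => xor (x₂ w) (y w), ?_⟩
    have e : (fun w => xor (xor (x₂ w) (y w)) (y w)) = x₂ := by
      funext w; cases x₂ w <;> cases y w <;> rfl
    rw [hatg, e]
    cases hg : gcl f y A x₂ v <;> cases hy : y v <;> simp_all

end Clamp

section Main
variable (f : BNState n → BNState n) (y : BNState n)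

def signE (b : Bool) : ℤ := if b then -1 else 1

lemma hatg_indep {A : Finset (Fin n)} {u : Fin n} (hu : u ∈ A) (x : BNState n) (b : Bool) (v : Fin n) :
    hatg f y A (Function.update x u b) v = hatg f y A x v := by
  have e : (fun w => xor (Function.update x u b w) (y w)) =
      Function.update (fun w => xor (x w) (y w)) u (xor b (y u)) := by
    funext w
    by_cases hw : w = u
    · subst hw; simp
    · simp [Function.update_of_ne hw]
  rw [hatg, e, gcl_indep f y hu]
  rfl

lemma sign_of_hat_posArc {A : Finset (Fin n)} {u v : Fin n} (hu : u ∉ A)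
    (h : posArc (hatg f y A) u v) : arcSign f u v (signE (y u) * signE (y v)) := by
  obtain ⟨x, hx1, hx2, hx3⟩ := h
  set w : BNState n := fun t => xor (x t) (y t) with hw
  have hwu : w u = y u := by simp [hw, hx1]
  have h1 : gcl f y A w v = y v := by
    rw [hatg] at hx2
    cases hg : gcl f y A w v <;> cases hy : y v <;> simp_all
  have e : (fun t => xor (Function.update x u true t) (y t)) =
      Function.update w u (! y u) := by
    funext t
    by_cases ht : t = u
    · subst ht; simp [hw]
    · simp [Function.update_of_ne ht, hw]
  have h2 : gcl f y A (Function.update w u (! y u)) v = ! y v := by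
    rw [hatg] at hx3
    rw [e] at hx3
    cases hg : gcl f y A (Function.update w u (! y u)) v <;> cases hy : y v <;> simp_all
  cases hyu : y u
  · -- w u = false; flipping u to true sends value y v to ! y v
    have hwu' : w u = false := by rw [hwu, hyu]
    rw [hyu] at h2
    simp only [Bool.not_false] at h2
    cases hyv : y v
    · left
      refine ⟨rfl, posArc_gcl f y hu ⟨w, hwu', by rw [h1, hyv], by rw [h2, hyv]; rfl⟩⟩
    · right
      refine ⟨by simp [signE, hyu, hyv], negArc_gcl f y hu ⟨w, hwu', by rw [h1, hyv], by rw [h2, hyv]; rfl⟩⟩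
  · -- w u = true
    have hwu' : w u = true := by rw [hwu, hyu]
    rw [hyu] at h2
    simp only [Bool.not_true] at h2
    set w' : BNState n := Function.update w u false with hw'
    have hw'u : w' u = false := by simp [hw']
    have hupd : Function.update w' u true = w := by
      funext t
      by_cases ht : t = u
      · subst ht; simp [Function.update_self, hwu']
      · simp [hw', Function.update_of_ne ht]
    have h2' : gcl f y A w' v = ! y v := h2
    cases hyv : y v
    · right
      refine ⟨by simp [signE, hyu, hyv], negArc_gcl f y hu ⟨w', hw'u, by rw [h2', hyv]; rfl, by rw [hupd, h1, hyv]⟩⟩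
    · left
      refine ⟨by simp [signE, hyu, hyv], posArc_gcl f y hu ⟨w', hw'u, by rw [h2', hyv]; rfl, by rw [hupd, h1, hyv]⟩⟩

lemma prod_signE {m : ℕ} (w : Fin (m+1) → Fin n) :
    (∏ i, signE (y (w i)) * signE (y (w (i+1)))) = 1 := by
  rw [Finset.prod_mul_distrib]
  have e : (∏ i, signE (y (w (i+1)))) = ∏ i, signE (y (w i)) :=
    Fintype.prod_equiv (Equiv.addRight (1 : Fin (m+1))) _ _ (fun i => rfl)
  rw [e, ← Finset.prod_mul_distrib]
  apply Finset.prod_eq_one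
  intro i _
  cases y (w i) <;> simp [signE]

/-- Key contradiction: if every vertex outside `A` has a non-constant clamped component,
then `f` has a positive cycle. -/
lemma main_contra (hyfix : f y = y) (A : Finset (Fin n))
    (hne : ∃ v, v ∉ A) (hnc : ∀ v, v ∉ A → ¬ ConstComp f y A v) :
    hasPosCycleOutside f (∅ : Set (Fin n)) := by
  set R : Set (Fin n) := {v | v ∉ A} with hR
  have hpred : ∀ v ∈ R, ∃ u ∈ R, posArc (hatg f y A) u v := by
    intro v hv
    obtain ⟨x, hx⟩ := hatg_exists_true f y (hnc v hv) hyfix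
    obtain ⟨u, z, hu1, hz1, hz2, hz3⟩ :=
      exists_up_flip (fun x => hatg f y A x v) (hatg_zero f y A hyfix v) x hx
    have hu : u ∉ A := by
      intro huA
      rw [hatg_indep f y huA] at hz3
      rw [hz2] at hz3; simp at hz3
    exact ⟨u, hu, z, hz1, hz2, hz3⟩
  obtain ⟨m, w, hinj, hmem, harc⟩ := exists_cycle ⟨_, hne.choose_spec⟩ hpred
  refine ⟨m, w, fun i => signE (y (w i)) * signE (y (w (i+1))), hinj, by simp, ?_, prod_signE y w⟩
  intro i
  exact sign_of_hat_posArc f y (hmem i) (harc i)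

/-- Key contradiction against the FVS hypothesis. -/
lemma fvs_contra (F : Finset (Fin n)) (A : Finset (Fin n)) (hFA : F ⊆ A)
    (hne : ∃ v, v ∉ A) (hnc : ∀ v, v ∉ A → ¬ ConstComp f y A v) :
    hasCycleOutside f (↑F : Set (Fin n)) := by
  set R : Set (Fin n) := {v | v ∉ A} with hR
  have hpred : ∀ v ∈ R, ∃ u ∈ R, arcTo f u v ∧ posArc f u v ∨ ¬ posArc f u v ∧ arcTo f u v := by
    intro v hv
    have := hnc v hv
    rw [ConstComp] at this
    push_neg at this
    obtain ⟨x₁, x₂, hx⟩ := this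
    obtain ⟨u, _, harc⟩ := arc_of_ne (gcl f y A) hx
    obtain ⟨huA, harcf⟩ := arcTo_gcl f y harc
    by_cases hp : posArc f u v
    · exact ⟨u, huA, Or.inl ⟨harcf, hp⟩⟩
    · exact ⟨u, huA, Or.inr ⟨hp, harcf⟩⟩
  obtain ⟨m, w, hinj, hmem, harc⟩ := exists_cycle ⟨_, hne.choose_spec⟩ hpred
  refine ⟨m, w, fun i => if posArc f (w i) (w (i+1)) then 1 else -1, hinj, ?_, ?_⟩
  · intro i hFi
    exact (hmem i) (hFA hFi)
  · intro i
    rcases harc i with ⟨_, hp⟩ | ⟨hnp, harcf⟩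
    · left; exact ⟨by simp [hp], hp⟩
    · right
      refine ⟨by simp [hnp], ?_⟩
      rcases harcf with hp | hn
      · exact absurd hp hnp
      · exact hn

end Main

section Closure
variable (f : BNState n → BNState n) (y : BNState n) (F : Finset (Fin n))

noncomputable def Dop (A : Finset (Fin n)) : Finset (Fin n) :=
  A ∪ Finset.univ.filter (fun v => v ∉ F ∧ ConstComp f y A v)

lemma subset_Dop (A : Finset (Fin n)) : A ⊆ Dop f y F A := Finset.subset_union_left

noncomputable def Dcl (K : Finset (Fin n)) : Finset (Fin n) := (Dop f y F)^[n] K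

lemma Dcl_stab (K : Finset (Fin n)) : Dop f y F (Dcl f y F K) = Dcl f y F K := by
  set op := Dop f y F
  have hsub : ∀ A, A ⊆ op A := subset_Dop f y F
  have hgrow : ∀ j, j ≤ (op^[j] K).card ∨ op (op^[j] K) = op^[j] K := by
    intro j
    induction j with
    | zero => by_cases h : op K = K
              · exact Or.inr h
              · left; omega
    | succ j ih =>
      rcases ih with h | h
      · by_cases h2 : op (op^[j+1] K) = op^[j+1] K
        · exact Or.inr h2
        · left
          have h3 : op^[j+1] K = op (op^[j] K) := Function.iterate_succ_apply' op j K
          have hss : op^[j] K ⊆ op^[j+1] K := by rw [h3]; exact hsub _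
          have : op^[j] K ≠ op^[j+1] K := by
            intro he
            rw [h3] at he
            rw [Function.iterate_succ_apply' op j K] at h2
            apply h2
            simp only [← he]
          have := Finset.card_lt_card (Finset.ssubset_iff_subset_ne.mpr ⟨hss, this⟩)
          omega
      · rw [Function.iterate_succ_apply' op j K, h]
        exact Or.inr h
  rcases hgrow n with h | h
  · -- card ≥ n forces Dcl = univ, and then Dop univ = univ
    have hcard : (op^[n] K).card = n := le_antisymm (by
      simpa using Finset.card_le_card (Finset.subset_univ (op^[n] K))) h
    have huniv : op^[n] K = Finset.univ := Finset.eq_univ_of_card _ (by simp [hcard])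
    show op (op^[n] K) = op^[n] K
    rw [huniv]
    apply le_antisymm ?_ (hsub _)
    exact Finset.subset_univ _
  · exact h

lemma Dcl_subset (K : Finset (Fin n)) : K ⊆ Dcl f y F K := by
  have : ∀ j, K ⊆ (Dop f y F)^[j] K := by
    intro j
    induction j with
    | zero => exact Finset.Subset.refl K
    | succ j ih =>
      rw [Function.iterate_succ_apply' (Dop f y F) j K]
      exact ih.trans (subset_Dop f y F _)
  exact this n

lemma Dcl_mem (K : Finset (Fin n)) :
    ∀ v ∈ Dcl f y F K, v ∈ K ∨ (v ∉ F ∧ ConstComp f y (Dcl f y F K) v) := by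
  have key : ∀ j, ∀ v ∈ (Dop f y F)^[j] K,
      v ∈ K ∨ (v ∉ F ∧ ConstComp f y ((Dop f y F)^[j] K) v) := by
    intro j
    induction j with
    | zero => intro v hv; exact Or.inl hv
    | succ j ih =>
      intro v hv
      rw [Function.iterate_succ_apply' (Dop f y F) j K] at hv
      have hsub : (Dop f y F)^[j] K ⊆ (Dop f y F)^[j+1] K := by
        rw [Function.iterate_succ_apply' (Dop f y F) j K]
        exact subset_Dop f y F _
      rcases Finset.mem_union.mp hv with h | h
      · rcases ih v h with h1 | ⟨h1, h2⟩
        · exact Or.inl h1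
        · exact Or.inr ⟨h1, constComp_mono f y hsub h2⟩
      · simp only [Finset.mem_filter, Finset.mem_univ, true_and] at h
        refine Or.inr ⟨h.1, ?_⟩
        refine constComp_mono f y ?_ h.2
        rw [Function.iterate_succ_apply' (Dop f y F) j K]
        exact subset_Dop f y F _
  exact key n

lemma Dcl_notMem_nonconst (K : Finset (Fin n)) {v : Fin n} (hvF : v ∉ F)
    (hv : v ∉ Dcl f y F K) : ¬ ConstComp f y (Dcl f y F K) v := by
  intro hc
  apply hv
  rw [← Dcl_stab f y F K]
  apply Finset.mem_union_right
  simp only [Finset.mem_filter, Finset.mem_univ, true_and]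
  exact ⟨hvF, hc⟩

end Closure

section Sweep
variable (f : BNState n → BNState n) (π : Equiv.Perm (Fin n))

/-- Partial sweep: apply the first `k` updates of `f^π`. -/
def swp : ℕ → BNState n → BNState n
  | 0, x => x
  | (k+1), x => if h : k < n then seqStep f (π ⟨k, h⟩) (swp k x) else swp k x

lemma swp_eq_seqUpdate (x : BNState n) : swp f π n x = seqUpdate f π x := by
  have key : ∀ k (hk : k ≤ n),
      ((List.ofFn (fun i => π i)).take k).foldl (fun y u => seqStep f u y) x = swp f π k x := by
    intro k
    induction k with
    | zero => intro _; simp [swp]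
    | succ k ih =>
      intro hk
      have hkn : k < n := hk
      have hlen : k < (List.ofFn (fun i : Fin n => π i)).length := by simp [hkn]
      rw [List.take_succ, List.foldl_append, ih (le_of_lt hkn)]
      rw [List.getElem?_eq_getElem hlen]
      simp only [List.getElem_ofFn]
      show seqStep f _ (swp f π k x) = swp f π (k+1) x
      rw [swp]
      simp [hkn]
  have htake : (List.ofFn fun i : Fin n => π i).take n = List.ofFn fun i : Fin n => π i :=
    List.take_of_length_le (by simp)
  rw [seqUpdate, ← key n le_rfl, htake]

lemma swp_untouched (x : BNState n) (i : Fin n) :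
    ∀ k, k ≤ i.1 → swp f π k x (π i) = x (π i) := by
  intro k
  induction k with
  | zero => intro _; rfl
  | succ k ih =>
    intro hk
    rw [swp]
    have hkn : k < n := by have h2 := i.isLt; omega
    rw [dif_pos hkn]
    have hne : π ⟨k, hkn⟩ ≠ π i := by
      intro h
      have := π.injective h
      have : k = i.1 := by simpa [Fin.ext_iff] using this
      omega
    rw [seqStep, Function.update_of_ne (Ne.symm hne)]
    exact ih (by omega)

lemma swp_touched (x : BNState n) (i : Fin n) :
    ∀ k, i.1 < k → swp f π k x (π i) = f (swp f π i.1 x) (π i) := by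
  intro k
  induction k with
  | zero => intro hk; omega
  | succ k ih =>
    intro hk
    rw [swp]
    by_cases hkn : k < n
    · rw [dif_pos hkn]
      by_cases hki : k = i.1
      · have he : π ⟨k, hkn⟩ = π i := by
          apply congrArg
          exact Fin.ext hki
        rw [seqStep, he, Function.update_self, hki]
      · have hne : π ⟨k, hkn⟩ ≠ π i := by
          intro h
          exact hki (by simpa [Fin.ext_iff] using π.injective h)
        rw [seqStep, Function.update_of_ne (Ne.symm hne)]
        exact ih (by omega)
    · rw [dif_neg hkn]
      have h2 := i.isLt
      exact ih (by omega)

end Sweep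

section SweepMain
variable (f : BNState n → BNState n) (π : Equiv.Perm (Fin n)) (y : BNState n)
  (F : Finset (Fin n))

/-- During a sweep along a trajectory, components of `K` always carry the value `y`. -/
lemma sweep_K_always (K : Finset (Fin n)) (x' : BNState n)
    (hx'K : ∀ u ∈ K, x' u = y u) (hKend : ∀ u ∈ K, seqUpdate f π x' u = y u) :
    ∀ u ∈ K, ∀ k, swp f π k x' u = y u := by
  intro u hu k
  set i := π.symm u with hi
  have hπi : π i = u := π.apply_symm_apply u
  rcases le_or_gt k i.1 with h | h
  · rw [← hπi, swp_untouched f π x' i k h, hπi]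
    exact hx'K u hu
  · rw [← hπi, swp_touched f π x' i k h]
    have h2 : swp f π n x' (π i) = f (swp f π i.1 x') (π i) :=
      swp_touched f π x' i n i.isLt
    rw [← h2, swp_eq_seqUpdate, hπi]
    exact hKend u hu

/-- Propagation within one sweep: every non-`F` vertex of the closure `D` takes value `y`
as soon as it has been updated. -/
lemma sweep_prop (hyfix : f y = y)
    (hcomp₂ : ∀ i j : Fin n, π i ∉ F → π j ∉ F →
      (posArc f (π i) (π j) ∨ negArc f (π i) (π j)) → i < j)
    (K : Finset (Fin n)) (x' : BNState n)
    (hx'K : ∀ u ∈ K, x' u = y u) (hKend : ∀ u ∈ K, seqUpdate f π x' u = y u) :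
    ∀ (N : ℕ) (i : Fin n), i.1 = N → π i ∈ Dcl f y F K → π i ∉ F →
      ∀ k, i.1 < k → swp f π k x' (π i) = y (π i) := by
  intro N
  induction N using Nat.strong_induction_on with
  | _ N ih =>
    intro i hiN hD hFi k hk
    rcases Dcl_mem f y F K (π i) hD with hK | ⟨_, hconst⟩
    · exact sweep_K_always f π y K x' hx'K hKend (π i) hK k
    · rw [swp_touched f π x' i k hk]
      set cur := swp f π i.1 x' with hcur
      have hagree : ∀ u ∈ Dcl f y F K, arcTo f u (π i) → cur u = y u := by
          intro u hu harc
          rcases Dcl_mem f y F K u hu with huK | ⟨huF, _⟩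
          · exact sweep_K_always f π y K x' hx'K hKend u huK i.1
          · set j := π.symm u with hj
            have hπj : π j = u := π.apply_symm_apply u
            have hji : j < i := by
              apply hcomp₂ j i (by rwa [hπj]) hFi
              rwa [hπj]
            have hjN : j.1 < N := by
              rw [← hiN]; exact hji
            rw [← hπj]
            exact ih j.1 hjN j rfl (by rwa [hπj]) (by rwa [hπj]) i.1 hji
      calc f cur (π i) = gcl f y (Dcl f y F K) cur (π i) := f_eq_gcl f y hagree
        _ = gcl f y (Dcl f y F K) y (π i) := hconst cur y
        _ = y (π i) := by rw [gcl_y f y _ hyfix]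

/-- If `w ∈ F` has constant clamped component, it is correct after the sweep. -/
lemma sweep_F_const (hyfix : f y = y)
    (hcomp₁ : ∀ i j : Fin n, π i ∈ F → π j ∉ F → j < i)
    (hcomp₂ : ∀ i j : Fin n, π i ∉ F → π j ∉ F →
      (posArc f (π i) (π j) ∨ negArc f (π i) (π j)) → i < j)
    (K : Finset (Fin n)) (x' : BNState n)
    (hx'K : ∀ u ∈ K, x' u = y u) (hKend : ∀ u ∈ K, seqUpdate f π x' u = y u)
    {w : Fin n} (hwF : w ∈ F) (hconst : ConstComp f y (Dcl f y F K) w) :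
    seqUpdate f π x' w = y w := by
  set i := π.symm w with hi
  have hπi : π i = w := π.apply_symm_apply w
  rw [← swp_eq_seqUpdate, ← hπi, swp_touched f π x' i n i.isLt]
  set cur := swp f π i.1 x' with hcur
  have hagree : ∀ u ∈ Dcl f y F K, arcTo f u (π i) → cur u = y u := by
    intro u hu _
    rcases Dcl_mem f y F K u hu with huK | ⟨huF, _⟩
    · exact sweep_K_always f π y K x' hx'K hKend u huK i.1
    · set j := π.symm u with hj
      have hπj : π j = u := π.apply_symm_apply u
      have hji : j < i := by
        apply hcomp₁ i j (by rwa [hπi]) (by rwa [hπj])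
      rw [← hπj]
      exact sweep_prop f π y F hyfix hcomp₂ K x' hx'K hKend j.1 j rfl
        (by rwa [hπj]) (by rwa [hπj]) i.1 hji
  have hconst' : ConstComp f y (Dcl f y F K) (π i) := by rwa [hπi]
  calc f cur (π i) = gcl f y (Dcl f y F K) cur (π i) := f_eq_gcl f y hagree
    _ = gcl f y (Dcl f y F K) y (π i) := hconst' cur y
    _ = y (π i) := by rw [gcl_y f y _ hyfix]

/-- Every updated non-`F` vertex of the closure is correct after the sweep. -/
lemma sweep_nonF (hyfix : f y = y)
    (hcomp₂ : ∀ i j : Fin n, π i ∉ F → π j ∉ F →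
      (posArc f (π i) (π j) ∨ negArc f (π i) (π j)) → i < j)
    (K : Finset (Fin n)) (x' : BNState n)
    (hx'K : ∀ u ∈ K, x' u = y u) (hKend : ∀ u ∈ K, seqUpdate f π x' u = y u)
    {v : Fin n} (hv : v ∈ Dcl f y F K) (hvF : v ∉ F) :
    seqUpdate f π x' v = y v := by
  set i := π.symm v with hi
  have hπi : π i = v := π.apply_symm_apply v
  rw [← swp_eq_seqUpdate, ← hπi]
  exact sweep_prop f π y F hyfix hcomp₂ K x' hx'K hKend i.1 i rfl
    (by rwa [hπi]) (by rwa [hπi]) n i.isLt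

end SweepMain

section FixedPoints
variable (f : BNState n → BNState n) (π : Equiv.Perm (Fin n))

lemma seq_fix_of_fix {z : BNState n} (hz : f z = z) : seqUpdate f π z = z := by
  have key : ∀ k, swp f π k z = z := by
    intro k
    induction k with
    | zero => rfl
    | succ k ih =>
      rw [swp]
      by_cases h : k < n
      · rw [dif_pos h, ih, seqStep, hz]
        exact Function.update_eq_self _ _
      · rw [dif_neg h]; exact ih
  rw [← swp_eq_seqUpdate, key n]

lemma fix_of_seq_fix {z : BNState n} (hz : seqUpdate f π z = z) : f z = z := by
  have hswp : ∀ k, swp f π k z = z := by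
    intro k
    funext v
    have hπi : π (π.symm v) = v := π.apply_symm_apply v
    set i := π.symm v with hi
    rcases le_or_gt k i.1 with h | h
    · rw [← hπi, swp_untouched f π z i k h]
    · rw [← hπi, swp_touched f π z i k h]
      have h2 := swp_touched f π z i n i.isLt
      rw [swp_eq_seqUpdate, hz] at h2
      exact h2.symm
  funext v
  have hπi : π (π.symm v) = v := π.apply_symm_apply v
  set i := π.symm v with hi
  have h2 := swp_touched f π z i n i.isLt
  rw [swp_eq_seqUpdate, hz, hswp i.1] at h2
  rw [← hπi]
  exact h2.symm

end FixedPoints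

section Forward
variable (f : BNState n → BNState n) (π : Equiv.Perm (Fin n)) (y : BNState n)
  (F : Finset (Fin n))

lemma forward_direction
    (hpos : ¬ hasPosCycleOutside f (∅ : Set (Fin n)))
    (hF : ¬ hasCycleOutside f (↑F : Set (Fin n)))
    (hcomp₁ : ∀ i j : Fin n, π i ∈ F → π j ∉ F → j < i)
    (hcomp₂ : ∀ i j : Fin n, π i ∉ F → π j ∉ F →
      (posArc f (π i) (π j) ∨ negArc f (π i) (π j)) → i < j)
    (hyfix : f y = y) :
    ∀ x : BNState n, (seqUpdate f π)^[F.card + 1] x = y := by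
  classical
  set g := seqUpdate f π with hg
  set J : ℕ → Finset (Fin n) :=
    fun t => Finset.univ.filter (fun u => ∀ x : BNState n, g^[t] x u = y u) with hJ
  have hJmem : ∀ t u, u ∈ J t ↔ ∀ x : BNState n, g^[t] x u = y u := by
    intro t u; simp [hJ]
  have hJmono : ∀ t, J t ⊆ J (t+1) := by
    intro t u hu
    rw [hJmem] at hu ⊢
    intro x
    rw [Function.iterate_succ_apply]
    exact hu (g x)
  have hgrow : ∀ t, ¬ (F ⊆ J t) → ∃ w, w ∈ F ∧ w ∉ J t ∧ w ∈ J (t+1) := by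
    intro t hFJ
    set K := F ∩ J t with hK
    have hKF : ∀ u ∈ K, u ∈ F := fun u hu => (Finset.mem_inter.mp hu).1
    obtain ⟨w₀, hw₀F, hw₀J⟩ : ∃ w, w ∈ F ∧ w ∉ J t := by
      by_contra h
      push_neg at h
      exact hFJ h
    -- find a vertex of F ∖ K whose clamped component is constant
    have hw : ∃ w, w ∈ F ∧ w ∉ K ∧ ConstComp f y (Dcl f y F K) w := by
      by_contra hno
      push_neg at hno
      have hw₀K : w₀ ∉ K := fun h => hw₀J (Finset.mem_inter.mp h).2
      have hw₀D : w₀ ∉ Dcl f y F K := by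
        intro h
        rcases Dcl_mem f y F K w₀ h with h1 | ⟨h1, _⟩
        · exact hw₀K h1
        · exact h1 hw₀F
      have hnc : ∀ v, v ∉ Dcl f y F K → ¬ ConstComp f y (Dcl f y F K) v := by
        intro v hv
        by_cases hvF : v ∈ F
        · refine hno v hvF ?_
          intro hvK
          exact hv (Dcl_subset f y F K hvK)
        · exact Dcl_notMem_nonconst f y F K hvF hv
      exact hpos (main_contra f y hyfix (Dcl f y F K) ⟨w₀, hw₀D⟩ hnc)
    obtain ⟨w, hwF, hwK, hwconst⟩ := hw
    refine ⟨w, hwF, fun h => hwK (Finset.mem_inter.mpr ⟨hwF, h⟩), ?_⟩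
    rw [hJmem]
    intro x
    set x' := g^[t] x with hx'
    have hx'K : ∀ u ∈ K, x' u = y u := by
      intro u hu
      exact (hJmem t u).mp (Finset.mem_inter.mp hu).2 x
    have hKend : ∀ u ∈ K, seqUpdate f π x' u = y u := by
      intro u hu
      have hu1 : u ∈ J (t+1) := hJmono t (Finset.mem_inter.mp hu).2
      have := (hJmem (t+1) u).mp hu1 x
      rw [Function.iterate_succ_apply'] at this
      exact this
    have := sweep_F_const f π y F hyfix hcomp₁ hcomp₂ K x' hx'K hKend hwF hwconst
    rw [Function.iterate_succ_apply']
    exact this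
  have hclaim : ∀ t, F ⊆ J t ∨ t ≤ (F ∩ J t).card := by
    intro t
    induction t with
    | zero => exact Or.inr (Nat.zero_le _)
    | succ t ih =>
      by_cases hFJ : F ⊆ J t
      · exact Or.inl (hFJ.trans (hJmono t))
      · rcases ih with h | h
        · exact absurd h hFJ
        · right
          obtain ⟨w, hwF, hwJ, hwJ1⟩ := hgrow t hFJ
          have hsub : insert w (F ∩ J t) ⊆ F ∩ J (t+1) := by
            intro u hu
            rcases Finset.mem_insert.mp hu with h1 | h1
            · subst h1; exact Finset.mem_inter.mpr ⟨hwF, hwJ1⟩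
            · obtain ⟨h2, h3⟩ := Finset.mem_inter.mp h1
              exact Finset.mem_inter.mpr ⟨h2, hJmono t h3⟩
          have hcard := Finset.card_le_card hsub
          have hw' : w ∉ F ∩ J t := fun h => hwJ (Finset.mem_inter.mp h).2
          rw [Finset.card_insert_of_notMem hw'] at hcard
          omega
  have hFJfinal : F ⊆ J F.card := by
    rcases hclaim F.card with h | h
    · exact h
    · have h2 : (F ∩ J F.card).card ≤ F.card :=
        Finset.card_le_card Finset.inter_subset_left
      have h3 : F ∩ J F.card = F :=
        Finset.eq_of_subset_of_card_le Finset.inter_subset_left (by omega)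
      exact Finset.inter_eq_left.mp h3
  -- the closure of F is everything
  have hDuniv : ∀ v, v ∈ Dcl f y F F := by
    by_contra h
    push_neg at h
    obtain ⟨v₀, hv₀⟩ := h
    have hnc : ∀ v, v ∉ Dcl f y F F → ¬ ConstComp f y (Dcl f y F F) v := by
      intro v hv
      have hvF : v ∉ F := fun h => hv (Dcl_subset f y F F h)
      exact Dcl_notMem_nonconst f y F F hvF hv
    exact hF (fvs_contra f y F (Dcl f y F F) (Dcl_subset f y F F) ⟨v₀, hv₀⟩ hnc)
  intro x
  funext v
  by_cases hv : v ∈ F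
  · exact (hJmem (F.card + 1) v).mp (hJmono F.card (hFJfinal hv)) x
  · set x' := g^[F.card] x with hx'
    have hx'K : ∀ u ∈ F, x' u = y u := by
      intro u hu
      exact (hJmem F.card u).mp (hFJfinal hu) x
    have hKend : ∀ u ∈ F, seqUpdate f π x' u = y u := by
      intro u hu
      have hu1 : u ∈ J (F.card+1) := hJmono F.card (hFJfinal hu)
      have := (hJmem (F.card+1) u).mp hu1 x
      rw [Function.iterate_succ_apply'] at this
      exact this
    have := sweep_nonF f π y F hyfix hcomp₂ F x' hx'K hKend (hDuniv v) hv
    rw [Function.iterate_succ_apply']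
    exact this

end Forward
end BNAux

/-- Let `f` have no positive cycles, `F` be a FVS of `G(f)` and `π` an order
compatible with `F`. Then `y` is the unique fixed point of `f` iff
`(f^π)^⟨|F|+1⟩(x) = y` for all `x`. -/
theorem unique_fixedPoint_iff_seq_iterate {n : ℕ} (f : BNState n → BNState n)
    (hpos : ¬ hasPosCycleOutside f (∅ : Set (Fin n)))
    (F : Finset (Fin n)) (hF : ¬ hasCycleOutside f (↑F : Set (Fin n)))
    (π : Equiv.Perm (Fin n))
    (hcomp₁ : ∀ i j : Fin n, π i ∈ F → π j ∉ F → j < i)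
    (hcomp₂ : ∀ i j : Fin n, π i ∉ F → π j ∉ F →
      (posArc f (π i) (π j) ∨ negArc f (π i) (π j)) → i < j)
    (y : BNState n) :
    (f y = y ∧ ∀ z : BNState n, f z = z → z = y) ↔
      (∀ x : BNState n, (seqUpdate f π)^[F.card + 1] x = y) := by
  constructor
  · rintro ⟨hyfix, -⟩
    exact BNAux.forward_direction f π y F hpos hF hcomp₁ hcomp₂ hyfix
  · intro h
    have hgy : seqUpdate f π y = y := by
      have h1 := h (seqUpdate f π y)
      rw [← Function.iterate_succ_apply, Function.iterate_succ_apply', h y] at h1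
      exact h1
    refine ⟨BNAux.fix_of_seq_fix f π hgy, ?_⟩
    intro z hz
    have hgz : seqUpdate f π z = z := BNAux.seq_fix_of_fix f π hz
    have := h z
    rwa [Function.iterate_fixed hgz] at this
end

section
/- Let f be a Boolean network and P a PFVS of its interaction graph G(f). Then the map sending each fixed point x of f to its restriction (x_v)_{v∈P} is injective; consequently f has at most 2^{|P|} fixed points. -/
open scoped Classical

lemma arc_of_flip {n : ℕ} (f : BNState n → BNState n) (v u : Fin n) (x : BNState n)
    (h : f x v ≠ f (Function.update x u (!(x u))) v) :
    arcSign f u v (if (!(x u)) = f (Function.update x u (!(x u))) v then 1 else -1) := by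
  set y := Function.update x u (!(x u)) with hy
  have hyu : y u = !(x u) := by simp [hy]
  cases hxu : x u
  · -- x u = false, y u = true, update x u true = y
    have hup : Function.update x u true = y := by rw [hy, hxu]; simp
    cases hfy : f y v
    · -- f x v = true, f y v = false : negArc, sign: (!(x u)) = true ≠ false
      have hfx : f x v = true := by
        cases hfx : f x v
        · exact absurd (by rw [hfx, hfy]) h
        · rfl
      norm_num
      exact Or.inr ⟨rfl, ⟨x, hxu, hfx, by rw [hup, hfy]⟩⟩
    · have hfx : f x v = false := by
        cases hfx : f x v
        · rfl
        · exact absurd (by rw [hfx, hfy]) h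
      norm_num
      exact Or.inl ⟨rfl, ⟨x, hxu, hfx, by rw [hup, hfy]⟩⟩
  · -- x u = true, y u = false; witness y, update y u true = x
    have hup : Function.update y u true = x := by
      rw [hy]
      funext w
      by_cases hw : w = u
      · subst hw; simp [hxu]
      · simp [Function.update_of_ne hw]
    have hyu' : y u = false := by rw [hyu, hxu]; rfl
    cases hfy : f y v
    · -- f y v = false, f x v = true : posArc; sign: (!(x u)) = false = f y v → 1
      have hfx : f x v = true := by
        cases hfx : f x v
        · exact absurd (by rw [hfx, hfy]) h
        · rfl
      norm_num
      exact Or.inl ⟨rfl, ⟨y, hyu', hfy, by rw [hup, hfx]⟩⟩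
    · have hfx : f x v = false := by
        cases hfx : f x v
        · rfl
        · exact absurd (by rw [hfx, hfy]) h
      norm_num
      exact Or.inr ⟨rfl, ⟨y, hyu', hfy, by rw [hup, hfx]⟩⟩

lemma key_lemma {n : ℕ} (f : BNState n → BNState n) (v : Fin n) :
    ∀ (k : ℕ) (x y : BNState n),
      (Finset.filter (fun u => x u ≠ y u) Finset.univ).card ≤ k →
      f x v ≠ f y v →
      ∃ u, x u ≠ y u ∧ arcSign f u v (if y u = f y v then 1 else -1) := by
  intro k
  induction k with
  | zero =>
    intro x y hc hne
    exfalso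
    apply hne
    have : x = y := by
      funext u
      by_contra hu
      have : u ∈ Finset.filter (fun u => x u ≠ y u) Finset.univ := by
        simp [hu]
      have := Finset.card_pos.mpr ⟨u, this⟩
      omega
    rw [this]
  | succ k ih =>
    intro x y hc hne
    have hxy : x ≠ y := fun h => hne (by rw [h])
    obtain ⟨u0, hu0⟩ : ∃ u0, x u0 ≠ y u0 := by
      by_contra h
      push_neg at h
      exact hxy (funext h)
    set x' := Function.update x u0 (y u0) with hx'
    have hx'u0 : x' u0 = y u0 := by simp [hx']
    by_cases h' : f x' v = f y v
    · -- flip at u0 changed the value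
      refine ⟨u0, hu0, ?_⟩
      have hflip : x' = Function.update x u0 (!(x u0)) := by
        rw [hx']
        congr 1
        cases hxu : x u0 <;> cases hyu : y u0 <;> simp_all
      have harc := arc_of_flip f v u0 x (by rw [← hflip, h']; exact hne)
      rw [← hflip, h'] at harc
      have : (!(x u0)) = y u0 := by
        cases hxu : x u0 <;> cases hyu : y u0 <;> simp_all
      rwa [this] at harc
    · -- recurse
      have hcard : (Finset.filter (fun u => x' u ≠ y u) Finset.univ).card ≤ k := by
        have hsub : Finset.filter (fun u => x' u ≠ y u) Finset.univ ⊆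
            (Finset.filter (fun u => x u ≠ y u) Finset.univ).erase u0 := by
          intro w hw
          simp only [Finset.mem_filter, Finset.mem_univ, true_and] at hw
          have hwne : w ≠ u0 := fun h => hw (by rw [h, hx'u0])
          rw [Finset.mem_erase]
          refine ⟨hwne, ?_⟩
          simp only [Finset.mem_filter, Finset.mem_univ, true_and]
          rwa [hx', Function.update_of_ne hwne] at hw
        have h1 := Finset.card_le_card hsub
        have h2 : u0 ∈ Finset.filter (fun u => x u ≠ y u) Finset.univ := by simp [hu0]
        have h3 := Finset.card_erase_of_mem h2
        omega
      obtain ⟨u, hu, harc⟩ := ih x' y hcard h'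
      have hwne : u ≠ u0 := fun h => hu (by rw [h, hx'u0])
      refine ⟨u, ?_, harc⟩
      rwa [hx', Function.update_of_ne hwne] at hu

lemma cycle_of_pred {n : ℕ} (f : BNState n → BNState n) (D P : Set (Fin n))
    (σ : Fin n → ℤ) (hσ : ∀ w, σ w = 1 ∨ σ w = -1)
    (g : Fin n → Fin n)
    (hg : ∀ v ∈ D, g v ∈ D ∧ arcSign f (g v) v (σ (g v) * σ v))
    (z0 : Fin n) (hz0 : z0 ∈ D) (hDP : ∀ v ∈ D, v ∉ P) :
    hasPosCycleOutside f P := by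
  have hiter : ∀ k, g^[k] z0 ∈ D := by
    intro k
    induction k with
    | zero => exact hz0
    | succ k ih => rw [Function.iterate_succ_apply']; exact (hg _ ih).1
  -- pigeonhole: find a < b with g^[a] z0 = g^[b] z0
  obtain ⟨a, b, hab, heq⟩ : ∃ a b : ℕ, a < b ∧ g^[a] z0 = g^[b] z0 := by
    have : ¬ Function.Injective (fun k : Fin (n+1) => g^[k] z0) := by
      intro hinj
      have := Fintype.card_le_of_injective _ hinj
      simp at this
    rw [Function.not_injective_iff] at this
    obtain ⟨i, j, hij, hne⟩ := this
    rcases lt_or_gt_of_ne (fun h : (i:ℕ) = (j:ℕ) => hne (Fin.ext h)) with h | h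
    · exact ⟨i, j, h, hij⟩
    · exact ⟨j, i, h, hij.symm⟩
  set z := g^[a] z0 with hz
  have hzD : ∀ k, g^[k] z ∈ D := fun k => by
    rw [hz, ← Function.iterate_add_apply]; exact hiter _
  have hper : ∃ p, 0 < p ∧ g^[p] z = z := by
    refine ⟨b - a, by omega, ?_⟩
    rw [hz, ← Function.iterate_add_apply]
    have : b - a + a = b := by omega
    rw [this, ← heq]
  classical
  set p := Nat.find hper with hp
  obtain ⟨hppos, hpz⟩ := Nat.find_spec hper
  rw [← hp] at hppos hpz
  set m := p - 1 with hm
  have hpm : p = m + 1 := by omega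
  -- distinctness of z, g z, ..., g^[m] z
  have hdist : ∀ i j : ℕ, i ≤ m → j ≤ m → g^[i] z = g^[j] z → i = j := by
    have main : ∀ i j : ℕ, i < j → j ≤ m → g^[i] z ≠ g^[j] z := by
      intro i j hij hjm hijeq
      have h2 : p - j + j = p := by omega
      have h1 : g^[p - j + i] z = z := by
        rw [Function.iterate_add_apply, hijeq, ← Function.iterate_add_apply, h2, hpz]
      have := Nat.find_min hper (m := p - j + i) (by omega)
      exact this ⟨by omega, h1⟩
    intro i j hi hj hijeq
    rcases lt_trichotomy i j with h | h | h
    · exact absurd hijeq (main i j h hj)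
    · exact h
    · exact absurd hijeq.symm (main j i h hi)
  refine ⟨m, fun t => g^[m - (t:ℕ)] z, fun t => σ (g^[m - (t:ℕ)] z) * σ (g^[m - ((t+1 : Fin (m+1)):ℕ)] z), ?_, ?_, ?_, ?_⟩
  · intro s t hst
    have := hdist (m - s) (m - t) (by omega) (by omega) hst
    have hs := s.isLt; have ht := t.isLt
    omega
  · intro i; exact hDP _ (hzD _)
  · intro t
    have hgw : g (g^[m - ((t+1 : Fin (m+1)):ℕ)] z) = g^[m - (t:ℕ)] z := by
      by_cases ht : (t:ℕ) = m
      · have h1 : ((t+1 : Fin (m+1)):ℕ) = 0 := by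
          have : (t:ℕ) + 1 = m + 1 := by omega
          simp [Fin.add_def, this]
        rw [h1, ht]
        simp only [Nat.sub_zero, Nat.sub_self]
        rw [← Function.iterate_succ_apply' g m z]
        have hms : m.succ = p := by omega
        rw [hms, hpz]
        simp
      · have htm : (t:ℕ) < m := by have := t.isLt; omega
        have h1 : ((t+1 : Fin (m+1)):ℕ) = (t:ℕ) + 1 := by
          simp [Fin.add_def, Nat.mod_eq_of_lt (by omega : (t:ℕ)+1 < m+1)]
        rw [h1]
        rw [← Function.iterate_succ_apply' g (m - ((t:ℕ)+1)) z]
        congr 1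
        omega
    have := (hg _ (hzD (m - ((t+1 : Fin (m+1)):ℕ)))).2
    rwa [hgw] at this
  · rw [Finset.prod_mul_distrib]
    have hre : ∏ t : Fin (m+1), σ (g^[m - ((t+1 : Fin (m+1)):ℕ)] z)
        = ∏ t : Fin (m+1), σ (g^[m - (t:ℕ)] z) := by
      exact Equiv.prod_comp (Equiv.addRight (1 : Fin (m+1))) (fun t => σ (g^[m - (t:ℕ)] z))
    rw [hre, ← Finset.prod_mul_distrib]
    apply Finset.prod_eq_one
    intro t _
    rcases hσ (g^[m - (t:ℕ)] z) with h | h <;> rw [h] <;> norm_num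

/-- The restriction to a PFVS `P` is injective on fixed points of `f`;
hence `f` has at most `2^{|P|}` fixed points. -/
theorem fixedPoints_inj_on_pfvs {n : ℕ} (f : BNState n → BNState n)
    (P : Finset (Fin n)) (hP : ¬ hasPosCycleOutside f (↑P : Set (Fin n))) :
    (∀ x y : BNState n, f x = x → f y = y → (∀ v ∈ P, x v = y v) → x = y) ∧
      Nat.card {x : BNState n // f x = x} ≤ 2 ^ P.card := by
  have hinj : ∀ x y : BNState n, f x = x → f y = y → (∀ v ∈ P, x v = y v) → x = y := by
    intro x y hfx hfy hagree
    by_contra hne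
    apply hP
    set D : Set (Fin n) := {v | x v ≠ y v} with hDdef
    set σ : Fin n → ℤ := fun w => if y w = true then 1 else -1 with hσdef
    have hσ : ∀ w, σ w = 1 ∨ σ w = -1 := fun w => by
      by_cases h : y w = true <;> simp [hσdef, h]
    have hex : ∀ v ∈ D, ∃ u, (x u ≠ y u) ∧ arcSign f u v (σ u * σ v) := by
      intro v hv
      have hne' : f x v ≠ f y v := by
        rw [congrFun hfx v, congrFun hfy v]; exact hv
      obtain ⟨u, hu, harc⟩ := key_lemma f v _ x y le_rfl hne'
      refine ⟨u, hu, ?_⟩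
      have hs : (if y u = f y v then (1:ℤ) else -1) = σ u * σ v := by
        rw [congrFun hfy v]
        cases hyu : y u <;> cases hyv : y v <;> simp [hσdef, hyu, hyv]
      rwa [hs] at harc
    set g : Fin n → Fin n :=
      fun v => if h : ∃ u, (x u ≠ y u) ∧ arcSign f u v (σ u * σ v)
        then h.choose else v with hgdef
    have hg : ∀ v ∈ D, g v ∈ D ∧ arcSign f (g v) v (σ (g v) * σ v) := by
      intro v hv
      have h := hex v hv
      simp only [hgdef, dif_pos h]
      exact ⟨h.choose_spec.1, h.choose_spec.2⟩
    obtain ⟨z0, hz0⟩ : ∃ z0, z0 ∈ D := by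
      by_contra h
      push_neg at h
      exact hne (funext fun v => by_contra fun hv => h v hv)
    exact cycle_of_pred f D (↑P) σ hσ g hg z0 hz0 (fun v hv hvP => hv (hagree v hvP))
  refine ⟨hinj, ?_⟩
  have hres : Function.Injective
      (fun x : {x : BNState n // f x = x} => (fun v : {v // v ∈ P} => x.val v.val)) := by
    intro x y h
    exact Subtype.ext (hinj x.1 y.1 x.2 y.2 (fun v hv => congrFun h ⟨v, hv⟩))
  calc Nat.card {x : BNState n // f x = x}
      ≤ Nat.card ({v // v ∈ P} → Bool) := Nat.card_le_card_of_injective _ hres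
    _ = 2 ^ P.card := by
        simp [Nat.card_eq_fintype_card, Fintype.card_coe]
end

section
/- Let f be a Boolean network such that I_k(f) = I_{k+1}(f) ≠ ∅ for some k. Then every vertex u ∈ I_k(f) has out-degree 0 in the interaction graph G(f^{I_k}), and if G(f^{I_k}) has a non-trivial strongly connected component, then it has an initial (source) non-trivial strongly connected component. -/
open scoped Classical

/-- Adjacency (unsigned) in the interaction graph. -/
def adjBN {n : ℕ} (g : BNState n → BNState n) (u v : Fin n) : Prop :=
  posArc g u v ∨ negArc g u v

/-- Reachability in the interaction graph. -/
def reachBN {n : ℕ} (g : BNState n → BNState n) : Fin n → Fin n → Prop :=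
  Relation.ReflTransGen (adjBN g)

/-- The strongly connected component of `u`. -/
def sccBN {n : ℕ} (g : BNState n → BNState n) (u : Fin n) : Set (Fin n) :=
  {w | reachBN g u w ∧ reachBN g w u}

/-- The SCC of `u` is non-trivial: it contains an arc. -/
def nontrivialSCC {n : ℕ} (g : BNState n → BNState n) (u : Fin n) : Prop :=
  ∃ a b : Fin n, a ∈ sccBN g u ∧ b ∈ sccBN g u ∧ adjBN g a b

/-- The SCC of `u` is initial: no arc enters it from outside. -/
def initialSCC {n : ℕ} (g : BNState n → BNState n) (u : Fin n) : Prop :=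
  ∀ w v : Fin n, v ∈ sccBN g u → adjBN g w v → w ∈ sccBN g u

lemma adj_of_flip {n : ℕ} (g : BNState n → BNState n) (u v : Fin n) (z : BNState n)
    (hz : z u = false) (h : g z v ≠ g (Function.update z u true) v) : adjBN g u v := by
  cases hgz : g z v with
  | false =>
    left; exact ⟨z, hz, hgz, by rw [hgz] at h; revert h; cases g (Function.update z u true) v <;> simp⟩
  | true =>
    right; exact ⟨z, hz, hgz, by rw [hgz] at h; revert h; cases g (Function.update z u true) v <;> simp⟩

lemma exists_arc_of_ne {n : ℕ} (g : BNState n → BNState n) (v : Fin n)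
    (x y : BNState n) (h : g x v ≠ g y v) : ∃ u, adjBN g u v := by
  suffices H : ∀ m (x y : BNState n),
      (Finset.univ.filter fun u => x u ≠ y u).card ≤ m → g x v ≠ g y v → ∃ u, adjBN g u v by
    exact H _ x y le_rfl h
  intro m
  induction m with
  | zero =>
    intro x y hc h
    exfalso
    have : x = y := by
      funext u
      by_contra hu
      have : u ∈ Finset.univ.filter fun u => x u ≠ y u := by simp [hu]
      have := Finset.card_pos.mpr ⟨u, this⟩
      omega
    exact h (this ▸ rfl)
  | succ m ih =>
    intro x y hc h
    by_cases hxy : x = y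
    · exact absurd (hxy ▸ rfl) h
    · have : ∃ u, x u ≠ y u := by
        by_contra hall; push_neg at hall; exact hxy (funext hall)
      obtain ⟨u, hu⟩ := this
      set y' := Function.update y u (x u) with hy'
      by_cases h2 : g x v = g y' v
      · -- g y' v ≠ g y v, single flip at u
        have hne : g y' v ≠ g y v := h2 ▸ h
        cases hyu : y u with
        | false =>
          have hxu : x u = true := by revert hu; rw [hyu]; cases x u <;> simp
          refine ⟨u, adj_of_flip g u v y hyu ?_⟩
          rw [hxu] at hy'
          exact fun e => hne (hy' ▸ e.symm)
        | true =>
          have hxu : x u = false := by revert hu; rw [hyu]; cases x u <;> simp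
          refine ⟨u, adj_of_flip g u v y' ?_ ?_⟩
          · rw [hy', hxu]; simp
          · have : Function.update y' u true = y := by
              funext w
              by_cases hw : w = u
              · subst hw; simp [hy', hyu]
              · simp [hy', Function.update, hw]
            rw [this]; exact hne
      · -- recurse on x, y'
        apply ih x y' ?_ h2
        have hsub : (Finset.univ.filter fun w => x w ≠ y' w)
            ⊆ (Finset.univ.filter fun w => x w ≠ y w).erase u := by
          intro w hw
          simp only [Finset.mem_filter, Finset.mem_univ, true_and] at hw
          have hwu : w ≠ u := by
            intro e; subst e; apply hw; rw [hy']; simp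
          rw [Finset.mem_erase]
          refine ⟨hwu, ?_⟩
          simp only [Finset.mem_filter, Finset.mem_univ, true_and]
          rwa [hy', Function.update_of_ne hwu] at hw
        have hu' : u ∈ Finset.univ.filter fun w => x w ≠ y w := by simp [hu]
        calc (Finset.univ.filter fun w => x w ≠ y' w).card
            ≤ ((Finset.univ.filter fun w => x w ≠ y w).erase u).card := Finset.card_le_card hsub
          _ = (Finset.univ.filter fun w => x w ≠ y w).card - 1 := Finset.card_erase_of_mem hu'
          _ ≤ m := by have := Finset.card_pos.mpr ⟨u, hu'⟩; omega

lemma graph_initial {n : ℕ} (g : BNState n → BNState n) (I : Set (Fin n))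
    (h0 : ∀ u ∈ I, ∀ v, ¬ adjBN g u v)
    (hin : ∀ v, v ∉ I → ∃ u, u ∉ I ∧ adjBN g u v)
    (hex : ∃ u, nontrivialSCC g u) :
    ∃ u, nontrivialSCC g u ∧ initialSCC g u := by
  obtain ⟨u0, hu0⟩ := hex
  haveI : Nonempty (Fin n) := ⟨u0⟩
  -- predecessor function
  have hpred : ∀ v : Fin n, ∃ p, v ∉ I → (p ∉ I ∧ adjBN g p v) := by
    intro v
    by_cases hv : v ∈ I
    · exact ⟨v, fun h => absurd hv h⟩
    · obtain ⟨p, hp⟩ := hin v hv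
      exact ⟨p, fun _ => hp⟩
  choose pred hpredspec using hpred
  -- Claim C: every vertex outside I has a nontrivial SCC behind it
  have claimC : ∀ w : Fin n, w ∉ I → ∃ t, nontrivialSCC g t ∧ reachBN g t w := by
    intro w hw
    set seq : ℕ → Fin n := fun m => pred^[m] w with hseqdef
    have hnotI : ∀ m, seq m ∉ I := by
      intro m
      induction m with
      | zero => exact hw
      | succ m ih =>
        have : seq (m+1) = pred (seq m) := Function.iterate_succ_apply' pred m w
        rw [this]
        exact (hpredspec (seq m) ih).1
    have harc : ∀ m, adjBN g (seq (m+1)) (seq m) := by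
      intro m
      have : seq (m+1) = pred (seq m) := Function.iterate_succ_apply' pred m w
      rw [this]
      exact (hpredspec (seq m) (hnotI m)).2
    have hreach : ∀ a b : ℕ, a ≤ b → reachBN g (seq b) (seq a) := by
      intro a b hab
      induction b, hab using Nat.le_induction with
      | base => exact Relation.ReflTransGen.refl
      | succ b hab ih => exact Relation.ReflTransGen.head (harc b) ih
    obtain ⟨i, j, hij, heq⟩ := Fintype.exists_ne_map_eq_of_card_lt
      (fun i : Fin (n+1) => seq i) (by simp)
    wlog hlt : (i : ℕ) < (j : ℕ) generalizing i j
    · exact this j i hij.symm heq.symm (by omega)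
    · -- seq i is on a cycle
      refine ⟨seq i, ⟨seq (i+1), seq i, ?_, ?_, harc i⟩, hreach 0 i (Nat.zero_le _)⟩
      · constructor
        · -- reach (seq i) (seq (i+1)) since seq i = seq j and i+1 ≤ j
          rw [show (seq i : Fin n) = seq j from heq]
          exact hreach (i+1) j hlt
        · exact Relation.ReflTransGen.single (harc i)
      · exact ⟨Relation.ReflTransGen.refl, Relation.ReflTransGen.refl⟩
  -- ancestors
  set anc : Fin n → Finset (Fin n) := fun u => Finset.univ.filter (fun t => reachBN g t u) with hanc
  have hmono : ∀ a b : Fin n, reachBN g a b → anc a ⊆ anc b := by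
    intro a b hab t ht
    simp only [hanc, Finset.mem_filter, Finset.mem_univ, true_and] at ht ⊢
    exact ht.trans hab
  obtain ⟨u, huS, humin⟩ := Finset.exists_min_image
    (Finset.univ.filter fun u => nontrivialSCC g u) (fun u => (anc u).card)
    ⟨u0, by simp [hu0]⟩
  have hu : nontrivialSCC g u := by simpa using huS
  refine ⟨u, hu, ?_⟩
  intro w v hv hadj
  have hwu : reachBN g w u := Relation.ReflTransGen.head hadj hv.2
  have hwI : w ∉ I := fun h => h0 w h v hadj
  obtain ⟨t, ht, htw⟩ := claimC w hwI
  have htu : reachBN g t u := htw.trans hwu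
  have hsub : anc t ⊆ anc u := hmono t u htu
  have hcard : (anc u).card ≤ (anc t).card := humin t (by simp [ht])
  have heq : anc t = anc u := Finset.eq_of_subset_of_card_le hsub hcard
  have huu : u ∈ anc u := by simp only [hanc, Finset.mem_filter, Finset.mem_univ, true_and]; exact Relation.ReflTransGen.refl
  have hut : reachBN g u t := by
    have : u ∈ anc t := heq ▸ huu
    simpa [hanc] using this
  exact ⟨hut.trans htw, hwu⟩

/-- If `I_k(f) = I_{k+1}(f) ≠ ∅`, then every `u ∈ I_k(f)` has out-degree `0`
in `G(f^{I_k})`, and if `G(f^{I_k})` has a non-trivial SCC then it has an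
initial non-trivial SCC. -/
theorem fI_graph_properties {n : ℕ} (f : BNState n → BNState n) (k : ℕ) (hk : 1 ≤ k)
    (hstab : (IC f k).1 = (IC f (k+1)).1) (hne : (IC f k).1 ≠ ∅) :
    (∀ u ∈ (IC f k).1, ∀ v : Fin n, ¬ adjBN (fI f k) u v) ∧
      ((∃ u : Fin n, nontrivialSCC (fI f k) u) →
        ∃ u : Fin n, nontrivialSCC (fI f k) u ∧ initialSCC (fI f k) u) := by
  have key : ∀ (x : BNState n) (u : Fin n), u ∈ (IC f k).1 →
      fI f k (Function.update x u true) = fI f k x := by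
    intro x u hu
    show f _ = f _
    apply congrArg
    funext w
    by_cases hw : w ∈ (IC f k).1
    · simp [hw]
    · have hwu : w ≠ u := fun e => hw (e ▸ hu)
      simp [hw, Function.update_of_ne hwu]
  have part1 : ∀ u ∈ (IC f k).1, ∀ v : Fin n, ¬ adjBN (fI f k) u v := by
    rintro u hu v (⟨x, hx0, h1, h2⟩ | ⟨x, hx0, h1, h2⟩) <;>
      rw [key x u hu] at h2 <;> rw [h1] at h2 <;> exact Bool.noConfusion h2
  refine ⟨part1, fun hex => ?_⟩
  have hin : ∀ v : Fin n, v ∉ (IC f k).1 → ∃ u, u ∉ (IC f k).1 ∧ adjBN (fI f k) u v := by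
    intro v hv
    have hv' : v ∉ (IC f (k+1)).1 := by rwa [hstab] at hv
    have hnc : ¬ ∀ x y : BNState n, fI f k x v = fI f k y v := by
      intro hall
      exact hv' hall
    push_neg at hnc
    obtain ⟨x, y, hxy⟩ := hnc
    obtain ⟨u, hu⟩ := exists_arc_of_ne (fI f k) v x y hxy
    exact ⟨u, fun h => part1 u h v hu, hu⟩
  exact graph_initial (fI f k) (IC f k).1 part1 hin hex
end
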